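/- arXiv:2201.04423 — 7 statements merged into one kernel-verified Lean document; each statement's English description precedes it below -/
import Mathlib

section
/- Let D be an integral domain and S a commutative unital D-algebra that is torsion-free as a D-module and generated as a D-algebra by its idempotents. Then every element s of S can be written as s = Σ_{i=0}^n a_i e_i where a_i ∈ D are pairwise distinct and e_0, ..., e_n are pairwise orthogonal idempotents of S with e_0 ∨ ... ∨ e_n = 1 (join in the boolean algebra of idempotents), and this representation is unique up to reordering. -/
open Finset

/-- A `D`-algebra `S` is torsion-free as a `D`-module. -/
def SpTorsionFree (D S : Type*) [CommRing D] [CommRing S] [Algebra D S] : Prop :=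
  ∀ (a : D) (s : S), a • s = 0 → a = 0 ∨ s = 0

/-- `S` is generated as a `D`-algebra by its idempotents. -/
def SpIdemGenerated (D S : Type*) [CommRing D] [CommRing S] [Algebra D S] : Prop :=
  Algebra.adjoin D {e : S | IsIdempotentElem e} = ⊤

/-- A Specker `D`-algebra: commutative unital, torsion-free, idempotent-generated. -/
def IsSpecker (D S : Type*) [CommRing D] [CommRing S] [Algebra D S] : Prop :=
  SpTorsionFree D S ∧ SpIdemGenerated D S

/-- The idempotents of `S`. -/
abbrev IdemOf (S : Type*) [Monoid S] := {e : S // IsIdempotentElem e}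

/-- A full orthogonal decomposition of `s` with pairwise distinct coefficients and
nonzero pairwise orthogonal idempotents summing (= joining) to `1`. -/
def FullOrthDecomp (D S : Type*) [CommRing D] [CommRing S] [Algebra D S] {n : ℕ}
    (a : Fin n → D) (e : Fin n → S) (s : S) : Prop :=
  Function.Injective a ∧ (∀ i, IsIdempotentElem (e i)) ∧ (∀ i, e i ≠ 0) ∧
    (∀ i j, i ≠ j → e i * e j = 0) ∧ (∑ i, e i = 1) ∧ s = ∑ i, a i • e i

/-- `s` has an orthogonal decomposition with nonnegative coefficients. -/
def OrthNonnegDecomp (D S : Type*) [CommRing D] [LinearOrder D] [IsStrictOrderedRing D] [CommRing S] [Algebra D S]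
    (s : S) : Prop :=
  ∃ (n : ℕ) (a : Fin n → D) (e : Fin n → S),
    (∀ i, 0 ≤ a i) ∧ (∀ i, IsIdempotentElem (e i)) ∧
    (∀ i j, i ≠ j → e i * e j = 0) ∧ s = ∑ i, a i • e i

/-- The canonical f-algebra order relation on a Specker algebra. -/
def specLE (D S : Type*) [CommRing D] [LinearOrder D] [IsStrictOrderedRing D] [CommRing S] [Algebra D S]
    (s t : S) : Prop :=
  OrthNonnegDecomp D S (t - s)

section Rel
variable {S : Type*}
def relUB (le : S → S → Prop) (A : Set S) (u : S) : Prop := ∀ x ∈ A, le x u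
def relLB (le : S → S → Prop) (A : Set S) (u : S) : Prop := ∀ x ∈ A, le u x
def relIsLUB (le : S → S → Prop) (A : Set S) (u : S) : Prop :=
  relUB le A u ∧ ∀ v, relUB le A v → le u v
def relIsGLB (le : S → S → Prop) (A : Set S) (u : S) : Prop :=
  relLB le A u ∧ ∀ v, relLB le A v → le v u
end Rel

/-- A function `D → B` belonging to Foster's boolean power `D[B]*`:
finitely valued, pairwise disjoint values, values join to `⊤`. -/
def IsBPFn (D B : Type*) [CommRing D] [BooleanAlgebra B] (f : D → B) : Prop :=
  (Set.range f).Finite ∧ (∀ a b : D, a ≠ b → f a ⊓ f b = ⊥) ∧ IsLUB (Set.range f) ⊤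

/-- Foster's boolean power `D[B]*` as a set of functions. -/
def DBStar (D B : Type*) [CommRing D] [BooleanAlgebra B] : Type _ :=
  {f : D → B // IsBPFn D B f}

/-- The boolean-power `D`-algebra operations on `D[B]*`, characterized via least upper bounds. -/
def FosterOps (D B : Type*) [CommRing D] [BooleanAlgebra B]
    [CommRing (DBStar D B)] [Algebra D (DBStar D B)] : Prop :=
  (∀ f g : DBStar D B, ∀ a : D,
      IsLUB {x : B | ∃ b c : D, b + c = a ∧ x = f.1 b ⊓ g.1 c} ((f + g).1 a)) ∧
  (∀ f g : DBStar D B, ∀ a : D,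
      IsLUB {x : B | ∃ b c : D, b * c = a ∧ x = f.1 b ⊓ g.1 c} ((f * g).1 a)) ∧
  (∀ (b : D) (f : DBStar D B) (a : D),
      IsLUB {x : B | ∃ c : D, b * c = a ∧ x = f.1 c} ((b • f).1 a))

/-- Decreasing step functions `D → B` determined by a chain `1 = e₀ > e₁ > ⋯ > eₙ > 0`
and thresholds `a₀ < a₁ < ⋯ < aₙ`. -/
def IsFlatFn (D B : Type*) [CommRing D] [LinearOrder D] [IsStrictOrderedRing D] [BooleanAlgebra B] (f : D → B) : Prop :=
  ∃ (n : ℕ) (a : Fin (n + 1) → D) (e : Fin (n + 1) → B),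
    StrictMono a ∧ StrictAnti e ∧ e 0 = ⊤ ∧ ⊥ < e (Fin.last n) ∧
    (∀ x : D, x ≤ a 0 → f x = ⊤) ∧
    (∀ (i : Fin n) (x : D), a i.castSucc < x → x ≤ a i.succ → f x = e i.succ) ∧
    (∀ x : D, a (Fin.last n) < x → f x = ⊥)

/-- The de Vries power `D[B]♭` as a set of decreasing step functions. -/
def DBFlat (D B : Type*) [CommRing D] [LinearOrder D] [IsStrictOrderedRing D] [BooleanAlgebra B] : Type _ :=
  {f : D → B // IsFlatFn D B f}

/-- A proximity on a torsion-free f-algebra over `D` (axioms (P1)–(P10)). -/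
def IsProximity (D S : Type*) [CommRing D] [LinearOrder D] [IsStrictOrderedRing D] [CommRing S] [Algebra D S]
    [Lattice S] (r : S → S → Prop) : Prop :=
  (r 0 0 ∧ r 1 1) ∧
  (∀ s t : S, r s t → s ≤ t) ∧
  (∀ s t u v : S, s ≤ t → r t u → u ≤ v → r s v) ∧
  (∀ s t u : S, r s t → r s u → r s (t ⊓ u)) ∧
  (∀ s t : S, r s t → r (-t) (-s)) ∧
  (∀ s t u v : S, r s t → r u v → r (s + u) (t + v)) ∧
  (∀ (s t : S) (a : D), 0 < a → r s t → r (a • s) (a • t)) ∧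
  (∀ s t : S, (∃ a : D, 0 < a ∧ r (a • s) (a • t)) → r s t) ∧
  (∀ s t u v : S, 0 ≤ s → 0 ≤ t → 0 ≤ u → 0 ≤ v → r s t → r u v → r (s * u) (t * v)) ∧
  (∀ s t : S, r s t → ∃ u, r s u ∧ r u t) ∧
  (∀ s : S, 0 < s → ∃ t, 0 < t ∧ r t s)

/-- A de Vries proximity on a boolean algebra. -/
def IsDeVriesProx (B : Type*) [BooleanAlgebra B] (p : B → B → Prop) : Prop :=
  (p ⊥ ⊥ ∧ p ⊤ ⊤) ∧
  (∀ a b : B, p a b → a ≤ b) ∧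
  (∀ a b c d : B, a ≤ b → p b c → c ≤ d → p a d) ∧
  (∀ a b c : B, p a b → p a c → p a (b ⊓ c)) ∧
  (∀ a b : B, p a b → p bᶜ aᶜ) ∧
  (∀ a b : B, p a b → ∃ c, p a c ∧ p c b) ∧
  (∀ a : B, a ≠ ⊥ → ∃ b, b ≠ ⊥ ∧ p b a)

/-- A Baer ring: the annihilator of every ideal is generated by an idempotent. -/
def IsBaer (S : Type*) [CommRing S] : Prop :=
  ∀ I : Ideal S, ∃ e : S, IsIdempotentElem e ∧
    ∀ r : S, (∀ s ∈ I, r * s = 0) ↔ ∃ x : S, r = x * e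

/-- Proximity morphisms between proximity (Baer-)Specker algebras (axioms (M1)–(M7)). -/
def IsProxMorphism (D S T : Type*) [CommRing D] [LinearOrder D] [IsStrictOrderedRing D]
    [CommRing S] [Algebra D S] [CommRing T] [Algebra D T] [Lattice S] [Lattice T]
    (rS : S → S → Prop) (rT : T → T → Prop) (α : S → T) : Prop :=
  α 0 = 0 ∧
  (∀ s t : S, α (s ⊓ t) = α s ⊓ α t) ∧
  (∀ s t : S, rS s t → rT (-(α (-s))) (α t)) ∧
  (∀ t : S, IsLUB {x : T | ∃ s : S, rS s t ∧ x = α s} (α t)) ∧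
  (∀ (s : S) (a : D), α (s + algebraMap D S a) = α s + algebraMap D T a) ∧
  (∀ (s : S) (a : D), 0 ≤ a → α (a • s) = a • α s) ∧
  (∀ (s : S) (a : D), α (s ⊔ algebraMap D S a) = α s ⊔ algebraMap D T a)

/-! Every element of the subalgebra generated by the idempotents is a combination `∑ aᵢ eᵢ` of a
complete family of orthogonal idempotents: a generator is `1 • e + 0 • (1 - e)`, and the sum and
the product of `∑ aᵢ eᵢ` and `∑ bⱼ fⱼ` are combinations of the family `eᵢ fⱼ`. Merging the
idempotents with equal coefficients and discarding the zero ones makes the decomposition full.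
For uniqueness, `s eᵢ fⱼ` equals both `aᵢ eᵢ fⱼ` and `bⱼ eᵢ fⱼ`, so by torsion-freeness
`aᵢ = bⱼ` whenever `eᵢ fⱼ ≠ 0`; as `eᵢ = ∑ⱼ eᵢ fⱼ`, injectivity of the coefficients matches
each `eᵢ` with exactly one `fⱼ`. -/

section CompleteOrthogonalIdempotents

variable {R : Type*} [CommRing R] {ι κ : Type*} [Fintype ι] [Fintype κ]

theorem CompleteOrthogonalIdempotents.mul_prod {e : ι → R} {f : κ → R}
    (he : CompleteOrthogonalIdempotents e) (hf : CompleteOrthogonalIdempotents f) :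
    CompleteOrthogonalIdempotents fun p : ι × κ => e p.1 * f p.2 where
  idem p := (he.idem p.1).mul (hf.idem p.2)
  ortho p q hpq := by
    dsimp only
    rw [mul_mul_mul_comm]
    by_cases h₁ : p.1 = q.1
    · rw [hf.ortho fun h₂ => hpq (Prod.ext h₁ h₂), mul_zero]
    · rw [he.ortho h₁, zero_mul]
  complete := by
    rw [Fintype.sum_prod_type, ← Finset.sum_mul_sum, he.complete, hf.complete, one_mul]

theorem CompleteOrthogonalIdempotents.sum_fiberwise [DecidableEq κ] {e : ι → R}
    (he : CompleteOrthogonalIdempotents e) (g : ι → κ) :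
    CompleteOrthogonalIdempotents fun k => ∑ i with g i = k, e i where
  idem _ := he.isIdempotentElem_sum
  ortho k k' hkk' := by
    dsimp only
    rw [Finset.sum_mul]
    refine Finset.sum_eq_zero fun i hi => ?_
    rw [mul_comm, Finset.sum_mul]
    refine Finset.sum_eq_zero fun j hj => ?_
    rw [mul_comm]
    refine he.ortho fun hij => hkk' ?_
    rw [← (Finset.mem_filter.mp hi).2, ← (Finset.mem_filter.mp hj).2, hij]
  complete := by rw [Finset.sum_fiberwise, he.complete]

theorem CompleteOrthogonalIdempotents.subtype_ne_zero [DecidableEq R] {e : ι → R}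
    (he : CompleteOrthogonalIdempotents e) :
    CompleteOrthogonalIdempotents fun i : {i // e i ≠ 0} => e i where
  idem i := he.idem i
  ortho i j hij := he.ortho fun h => hij (Subtype.ext h)
  complete := by
    rw [← Finset.sum_subtype (Finset.univ.filter fun i => e i ≠ 0) (fun i => by simp),
      Finset.sum_filter_ne_zero, he.complete]

end CompleteOrthogonalIdempotents

section Decomposition

variable {D S : Type*} [CommRing D] [CommRing S] [Algebra D S] {ι κ : Type*} [Fintype ι] [Fintype κ]

theorem sum_smul_mul_sum_smul (a : ι → D) (e : ι → S) (b : κ → D) (f : κ → S) :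
    (∑ i, a i • e i) * ∑ j, b j • f j = ∑ p : ι × κ, (a p.1 * b p.2) • (e p.1 * f p.2) := by
  simp only [Finset.sum_mul_sum, Fintype.sum_prod_type, smul_mul_smul_comm]

theorem sum_smul_add_sum_smul (a : ι → D) {e : ι → S} (b : κ → D) {f : κ → S}
    (he : ∑ i, e i = 1) (hf : ∑ j, f j = 1) :
    ∑ i, a i • e i + ∑ j, b j • f j = ∑ p : ι × κ, (a p.1 + b p.2) • (e p.1 * f p.2) := by
  have hsplit : ∀ p : ι × κ, (a p.1 + b p.2) • (e p.1 * f p.2) =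
      a p.1 • e p.1 * f p.2 + e p.1 * b p.2 • f p.2 := fun p => by
    rw [add_smul, smul_mul_assoc, mul_smul_comm]
  rw [Finset.sum_congr rfl fun p _ => hsplit p, Finset.sum_add_distrib]
  simp only [Fintype.sum_prod_type]
  rw [← Finset.sum_mul_sum, ← Finset.sum_mul_sum, hf, he, mul_one, one_mul]

theorem OrthogonalIdempotents.sum_smul_mul {e : ι → S} (he : OrthogonalIdempotents e)
    (a : ι → D) (i : ι) : (∑ j, a j • e j) * e i = a i • e i := by
  rw [Finset.sum_mul, Finset.sum_eq_single i (fun j _ hji => by rw [smul_mul_assoc, he.ortho hji,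
    smul_zero]) (by simp), smul_mul_assoc, (he.idem i).eq]

theorem fullOrthDecomp_iff {n : ℕ} {a : Fin n → D} {e : Fin n → S} {s : S} :
    FullOrthDecomp D S a e s ↔ Function.Injective a ∧ CompleteOrthogonalIdempotents e ∧
      (∀ i, e i ≠ 0) ∧ s = ∑ i, a i • e i :=
  ⟨fun ⟨ha, hid, hne, hortho, hsum, hs⟩ => ⟨ha, ⟨⟨hid, hortho⟩, hsum⟩, hne, hs⟩,
    fun ⟨ha, ⟨⟨hid, hortho⟩, hsum⟩, hne, hs⟩ => ⟨ha, hid, hne, hortho, hsum, hs⟩⟩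

variable (D) in
def HasOrthDecomp (s : S) : Prop :=
  ∃ (ι : Type) (_ : Fintype ι) (a : ι → D) (e : ι → S),
    CompleteOrthogonalIdempotents e ∧ s = ∑ i, a i • e i

theorem IsIdempotentElem.hasOrthDecomp {e : S} (he : IsIdempotentElem e) : HasOrthDecomp D e :=
  ⟨Fin 2, inferInstance, ![1, 0], ![e, 1 - e], .of_isIdempotentElem he, by simp⟩

theorem hasOrthDecomp_algebraMap (r : D) : HasOrthDecomp D (algebraMap D S r) :=
  ⟨Unit, inferInstance, fun _ => r, fun _ => 1, CompleteOrthogonalIdempotents.unique_iff.mpr rfl,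
    by simp [Algebra.algebraMap_eq_smul_one]⟩

theorem HasOrthDecomp.add {s t : S} (hs : HasOrthDecomp D s) (ht : HasOrthDecomp D t) :
    HasOrthDecomp D (s + t) := by
  obtain ⟨ι, _, a, e, he, rfl⟩ := hs
  obtain ⟨κ, _, b, f, hf, rfl⟩ := ht
  exact ⟨ι × κ, inferInstance, _, _, he.mul_prod hf,
    sum_smul_add_sum_smul a b he.complete hf.complete⟩

theorem HasOrthDecomp.mul {s t : S} (hs : HasOrthDecomp D s) (ht : HasOrthDecomp D t) :
    HasOrthDecomp D (s * t) := by
  obtain ⟨ι, _, a, e, he, rfl⟩ := hs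
  obtain ⟨κ, _, b, f, hf, rfl⟩ := ht
  exact ⟨ι × κ, inferInstance, _, _, he.mul_prod hf, sum_smul_mul_sum_smul a e b f⟩

theorem hasOrthDecomp_of_mem_adjoin {s : S}
    (hs : s ∈ Algebra.adjoin D {e : S | IsIdempotentElem e}) : HasOrthDecomp D s := by
  induction hs using Algebra.adjoin_induction with
  | mem e he => exact IsIdempotentElem.hasOrthDecomp he
  | algebraMap r => exact hasOrthDecomp_algebraMap r
  | add s t _ _ hs ht => exact hs.add ht
  | mul s t _ _ hs ht => exact hs.mul ht

theorem exists_fullOrthDecomp_of_injective {a : ι → D} {e : ι → S} {s : S}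
    (ha : Function.Injective a) (he : CompleteOrthogonalIdempotents e) (hne : ∀ i, e i ≠ 0)
    (hs : s = ∑ i, a i • e i) :
    ∃ (n : ℕ) (a : Fin n → D) (e : Fin n → S), FullOrthDecomp D S a e s := by
  let σ := (Fintype.equivFin ι).symm
  refine ⟨_, a ∘ σ, e ∘ σ, fullOrthDecomp_iff.mpr
    ⟨ha.comp σ.injective, (CompleteOrthogonalIdempotents.equiv σ).mpr he, fun i => hne (σ i), ?_⟩⟩
  rw [hs]
  exact (σ.sum_comp fun i => a i • e i).symm

theorem HasOrthDecomp.exists_fullOrthDecomp {s : S} (hs : HasOrthDecomp D s) :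
    ∃ (n : ℕ) (a : Fin n → D) (e : Fin n → S), FullOrthDecomp D S a e s := by
  classical
  obtain ⟨ι, _, a, e, he, rfl⟩ := hs
  let g := Set.rangeFactorization a
  let E : Set.range a → S := fun d => ∑ i with g i = d, e i
  have hE : CompleteOrthogonalIdempotents E := he.sum_fiberwise g
  have hsum : ∑ i, a i • e i = ∑ d : Set.range a, (d : D) • E d := by
    simp only [E, Finset.smul_sum]
    rw [← Finset.sum_fiberwise _ g]
    refine Finset.sum_congr rfl fun d _ => Finset.sum_congr rfl fun i hi => ?_
    rw [← (Finset.mem_filter.mp hi).2]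
    rfl
  refine exists_fullOrthDecomp_of_injective (fun d d' h => Subtype.ext (Subtype.ext h))
    hE.subtype_ne_zero (fun d => d.2) ?_
  rw [hsum, ← Finset.sum_filter_of_ne (p := fun d : Set.range a => E d ≠ 0)
    fun d _ h => right_ne_zero_of_smul h, Finset.sum_subtype (p := fun d => E d ≠ 0) _ (fun d => by simp)]

theorem coeff_eq_of_mul_ne_zero (hTF : SpTorsionFree D S) {a : ι → D} {e : ι → S} {b : κ → D}
    {f : κ → S} (he : OrthogonalIdempotents e) (hf : OrthogonalIdempotents f)
    (hs : ∑ i, a i • e i = ∑ j, b j • f j) {i : ι} {j : κ} (hij : e i * f j ≠ 0) : a i = b j := by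
  have h : (a i - b j) • (e i * f j) = 0 := by
    calc (a i - b j) • (e i * f j)
        = (∑ i, a i • e i) * e i * f j - (∑ j, b j • f j) * f j * e i := by
          rw [he.sum_smul_mul, hf.sum_smul_mul, sub_smul, smul_mul_assoc, smul_mul_assoc,
            mul_comm (f j)]
      _ = 0 := by rw [hs]; ring
  exact sub_eq_zero.mp ((hTF _ _ h).resolve_right hij)

theorem exists_coeff_eq_and_mul_eq_self (hTF : SpTorsionFree D S) {a : ι → D} {e : ι → S}
    {b : κ → D} {f : κ → S} (he : OrthogonalIdempotents e) (hf : CompleteOrthogonalIdempotents f)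
    (hb : Function.Injective b) (hs : ∑ i, a i • e i = ∑ j, b j • f j) {i : ι} (hi : e i ≠ 0) :
    ∃ j, b j = a i ∧ e i * f j = e i := by
  have hsplit : e i = ∑ j, e i * f j := by rw [← Finset.mul_sum, hf.complete, mul_one]
  rw [hsplit] at hi
  obtain ⟨j, -, hj⟩ := Finset.exists_ne_zero_of_sum_ne_zero hi
  have hba := (coeff_eq_of_mul_ne_zero hTF he hf.1 hs hj).symm
  have hzero : ∀ j' ≠ j, e i * f j' = 0 := fun j' hj' => by
    by_contra h
    exact hj' (hb (by rw [← coeff_eq_of_mul_ne_zero hTF he hf.1 hs h, hba]))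
  refine ⟨j, hba, ?_⟩
  conv_rhs => rw [hsplit, Fintype.sum_eq_single j hzero]

theorem exists_equiv_of_sum_smul_eq (hTF : SpTorsionFree D S) {a : ι → D} {e : ι → S}
    {b : κ → D} {f : κ → S} (ha : Function.Injective a) (hb : Function.Injective b)
    (he : CompleteOrthogonalIdempotents e) (hf : CompleteOrthogonalIdempotents f)
    (hne : ∀ i, e i ≠ 0) (hfne : ∀ j, f j ≠ 0) (hs : ∑ i, a i • e i = ∑ j, b j • f j) :
    ∃ σ : ι ≃ κ, ∀ i, b (σ i) = a i ∧ f (σ i) = e i := by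
  choose σ hσb hσe using fun i => exists_coeff_eq_and_mul_eq_self hTF he.1 hf hb hs (hne i)
  choose τ hτa hτf using fun j => exists_coeff_eq_and_mul_eq_self hTF hf.1 he ha hs.symm (hfne j)
  have hτσ : ∀ i, τ (σ i) = i := fun i => ha (by rw [hτa, hσb])
  have hστ : ∀ j, σ (τ j) = j := fun j => hb (by rw [hσb, hτa])
  refine ⟨⟨σ, τ, hτσ, hστ⟩, fun i => ⟨hσb i, ?_⟩⟩
  calc f (σ i) = f (σ i) * e (τ (σ i)) := (hτf _).symm
    _ = e i := by rw [hτσ, mul_comm, hσe]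

end Decomposition

theorem statement0_general (D S : Type*) [CommRing D] [CommRing S] [Algebra D S]
    (hS : IsSpecker D S) (s : S) :
    (∃ (n : ℕ) (a : Fin n → D) (e : Fin n → S), FullOrthDecomp D S a e s) ∧
    (∀ (n m : ℕ) (a : Fin n → D) (e : Fin n → S) (b : Fin m → D) (f : Fin m → S),
      FullOrthDecomp D S a e s → FullOrthDecomp D S b f s →
      ∃ σ : Fin n ≃ Fin m, ∀ i, b (σ i) = a i ∧ f (σ i) = e i) := by
  refine ⟨(hasOrthDecomp_of_mem_adjoin ?_).exists_fullOrthDecomp, fun n m a e b f h₁ h₂ => ?_⟩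
  · rw [hS.2]
    exact Algebra.mem_top
  · obtain ⟨ha, he, hne, rfl⟩ := fullOrthDecomp_iff.mp h₁
    obtain ⟨hb, hf, hfne, hs⟩ := fullOrthDecomp_iff.mp h₂
    exact exists_equiv_of_sum_smul_eq hS.1 ha hb he hf hne hfne hs

/-- existence and uniqueness (up to reordering) of full orthogonal
decompositions in a Specker `D`-algebra. -/
theorem statement0 (D S : Type*) [CommRing D] [IsDomain D] [CommRing S] [Algebra D S]
    (hS : IsSpecker D S) (s : S) :
    (∃ (n : ℕ) (a : Fin n → D) (e : Fin n → S), FullOrthDecomp D S a e s) ∧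
    (∀ (n m : ℕ) (a : Fin n → D) (e : Fin n → S) (b : Fin m → D) (f : Fin m → S),
      FullOrthDecomp D S a e s → FullOrthDecomp D S b f s →
      ∃ σ : Fin n ≃ Fin m, ∀ i, b (σ i) = a i ∧ f (σ i) = e i) :=
  statement0_general D S hS s
end

section
/- Let D be an integral domain, B a boolean algebra, and D[B]* the set of finitely-valued functions f : D → B with f(a) ∧ f(b) = 0 for all a ≠ b and ⋁ Im f = 1, with addition (f+g)(a) = ⋁{f(b) ∧ g(c) : b + c = a}, multiplication (fg)(a) = ⋁{f(b) ∧ g(c) : bc = a}, and scalar multiplication (bf)(a) = ⋁{f(c) : bc = a}. Then D[B]* is a commutative unital D-algebra. -/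
open Finset

/-!
Stone's representation embeds `B` into the power set of its Stone space `X`, and turns an element
`f` of `D[B]*` into the function `X → D` sending a point to the unique `d` whose `f d` contains it.
This map is injective, and it carries the three boolean-power formulas to the pointwise operations,
because a finite join of elements of `B` becomes a union of fibres. So `D[B]*` is in bijection with
a subalgebra of `X → D`, whose structure it inherits.
-/

/-- Points of the Stone space of `L`: its prime ideals (the topology plays no role here). -/
abbrev StoneSpace (L : Type*) [DistribLattice L] [BoundedOrder L] :=
  {I : Order.Ideal L // I.IsPrime}

namespace StoneSpace

section Lattice

variable {L : Type*} [DistribLattice L] [BoundedOrder L]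

def stone : BoundedLatticeHom L (Set (StoneSpace L)) where
  toFun a := {p | a ∉ p.1}
  map_sup' a b := by
    ext p
    simp only [Set.mem_ofPred_eq, Set.sup_eq_union, Set.mem_union, Order.Ideal.sup_mem_iff,
      not_and_or]
  map_inf' a b := by
    ext p
    simp only [Set.mem_ofPred_eq, Set.inf_eq_inter, Set.mem_inter_iff]
    refine ⟨fun h => ⟨fun ha => h (p.1.lower inf_le_left ha),
      fun hb => h (p.1.lower inf_le_right hb)⟩, fun ⟨ha, hb⟩ h => ?_⟩
    exact (p.2.mem_or_mem h).elim ha hb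
  map_top' := by
    ext p
    simpa using p.2.top_notMem
  map_bot' := by
    ext p
    simp

lemma stone_subset_stone {a b : L} : stone a ⊆ stone b ↔ a ≤ b := by
  refine ⟨fun h => ?_, fun h => OrderHomClass.mono stone h⟩
  by_contra hab
  have hdisj : Disjoint (Order.PFilter.principal a : Set L) (Order.Ideal.principal b) :=
    Set.disjoint_left.2 fun x hax hxb => hab (le_trans hax hxb)
  obtain ⟨J, hJ, hbJ, haJ⟩ := DistribLattice.prime_ideal_of_disjoint_filter_ideal hdisj
  have hp : (⟨J, hJ⟩ : StoneSpace L) ∈ stone a :=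
    fun ha => Set.disjoint_left.1 haJ (Order.PFilter.mem_principal.2 le_rfl) ha
  exact h hp (hbJ Order.Ideal.mem_principal_self)

lemma stone_injective : Function.Injective (stone (L := L)) := fun _ _ h =>
  le_antisymm (stone_subset_stone.1 h.le) (stone_subset_stone.1 h.ge)

end Lattice

section Represents

variable {X Y L : Type*} [DistribLattice L] [BoundedOrder L]

/-- Through Stone duality, `f` lists the fibres of `φ`. -/
def Represents (f : X → L) (φ : StoneSpace L → X) : Prop :=
  ∀ x, stone (f x) = φ ⁻¹' {x}

variable {f g : X → L} {φ ψ : StoneSpace L → X}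

namespace Represents

lemma mem_stone_apply (hf : Represents f φ) (p : StoneSpace L) : p ∈ stone (f (φ p)) := by
  rw [hf]; rfl

lemma left_unique (hf : Represents f φ) (hg : Represents g φ) : f = g :=
  funext fun x => stone_injective ((hf x).trans (hg x).symm)

lemma right_unique (hφ : Represents f φ) (hψ : Represents f ψ) : φ = ψ :=
  funext fun p => by simpa [hψ (φ p), eq_comm] using hφ.mem_stone_apply p

lemma inf_prod {h : Y → L} {χ : StoneSpace L → Y} (hf : Represents f φ) (hh : Represents h χ) :
    Represents (fun z : X × Y => f z.1 ⊓ h z.2) (fun p => (φ p, χ p)) := by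
  rintro ⟨x, y⟩
  ext p
  simp [hf x, hh y, Prod.ext_iff]

lemma exists_comp (hfin : (Set.range f).Finite) (hf : Represents f φ) (u : X → Y) :
    ∃ g : Y → L, (Set.range g).Finite ∧ Represents g (u ∘ φ) := by
  classical
  have hfib (y : Y) : (f '' (u ⁻¹' {y})).Finite := hfin.subset (Set.image_subset_range _ _)
  refine ⟨fun y => (hfib y).toFinset.sup id, ?_, fun y => ?_⟩
  · refine (hfin.toFinset.powerset.image (·.sup id)).finite_toSet.subset ?_
    rintro _ ⟨y, rfl⟩
    refine Finset.mem_image.2 ⟨_, Finset.mem_powerset.2 fun z hz => ?_, rfl⟩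
    simp only [Set.Finite.mem_toFinset] at hz ⊢
    exact Set.image_subset_range _ _ hz
  · ext p
    simp [map_finset_sup, Finset.sup_set_eq_biUnion, hf _]

lemma isLUB {u : X → Y} {g : Y → L} (hf : Represents f φ) (hg : Represents g (u ∘ φ)) (y : Y) :
    IsLUB {z | ∃ x, u x = y ∧ z = f x} (g y) := by
  refine ⟨?_, fun v hv => stone_subset_stone.1 fun p hp => ?_⟩
  · rintro _ ⟨x, rfl, rfl⟩
    refine stone_subset_stone.1 ?_
    rw [hf, hg]
    rintro p rfl
    rfl
  · rw [hg] at hp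
    exact stone_subset_stone.2 (hv ⟨φ p, hp, rfl⟩) (hf.mem_stone_apply p)

end Represents

lemma represents_top : Represents (fun _ : Unit => (⊤ : L)) (fun _ => ()) := fun _ => by
  simp

end Represents

end StoneSpace

open StoneSpace

section BooleanPower

variable {D B : Type*} [CommRing D] [BooleanAlgebra B]

lemma IsBPFn.exists_represents {f : D → B} (hf : IsBPFn D B f) :
    ∃ φ : StoneSpace B → D, Represents f φ := by
  obtain ⟨hfin, hdisj, htop⟩ := hf
  have hsup : hfin.toFinset.sup id = ⊤ := by
    have := Finset.isLUB_sup_id (s := hfin.toFinset)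
    rw [hfin.coe_toFinset] at this
    exact this.unique htop
  have hcover (p : StoneSpace B) : ∃ d, p ∈ stone (f d) := by
    have hp : p ∈ stone (hfin.toFinset.sup id) := by simp [hsup]
    simpa [map_finset_sup, Finset.sup_set_eq_biUnion] using hp
  choose φ hφ using hcover
  refine ⟨φ, fun d => Set.ext fun p => ⟨fun hp => ?_, fun hp => hp ▸ hφ p⟩⟩
  by_contra hne
  have hp' : p ∈ stone (f (φ p) ⊓ f d) := by simpa [map_inf] using ⟨hφ p, hp⟩
  simp [hdisj _ _ hne] at hp'

lemma isBPFn_of_represents {f : D → B} {φ : StoneSpace B → D} (hfin : (Set.range f).Finite)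
    (hf : Represents f φ) : IsBPFn D B f := by
  refine ⟨hfin, fun a b hab => stone_injective ?_, ⟨fun _ _ => le_top, fun v hv => ?_⟩⟩
  · rw [map_inf, hf a, hf b, map_bot]
    exact ((Set.disjoint_singleton.2 hab).preimage φ).eq_bot
  · exact stone_subset_stone.1 fun p _ => stone_subset_stone.2 (hv ⟨_, rfl⟩) (hf.mem_stone_apply p)

namespace DBStar

noncomputable def eval (f : DBStar D B) : StoneSpace B → D :=
  f.2.exists_represents.choose

lemma represents_eval (f : DBStar D B) : Represents f.1 (eval f) :=
  f.2.exists_represents.choose_spec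

lemma eval_injective : Function.Injective (eval (D := D) (B := B)) := fun f g h =>
  Subtype.ext ((represents_eval f).left_unique (h ▸ represents_eval g))

lemma exists_eval_eq_comp {X : Type*} {f : X → B} {φ : StoneSpace B → X}
    (hfin : (Set.range f).Finite) (hf : Represents f φ) (u : X → D) :
    ∃ h : DBStar D B, eval h = u ∘ φ := by
  obtain ⟨g, hgfin, hg⟩ := hf.exists_comp hfin u
  exact ⟨⟨g, isBPFn_of_represents hgfin hg⟩, (represents_eval _).right_unique hg⟩

lemma exists_eval_eq_const (d : D) : ∃ h : DBStar D B, eval h = fun _ => d :=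
  exists_eval_eq_comp (Set.finite_range _) represents_top fun _ => d

lemma exists_eval_eq_pointwise (op : D → D → D) (f g : DBStar D B) :
    ∃ h : DBStar D B, eval h = fun p => op (eval f p) (eval g p) := by
  refine exists_eval_eq_comp ((f.2.1.image2 (· ⊓ ·) g.2.1).subset ?_)
    ((represents_eval f).inf_prod (represents_eval g)) fun z => op z.1 z.2
  rintro _ ⟨z, rfl⟩
  exact Set.mem_image2_of_mem ⟨z.1, rfl⟩ ⟨z.2, rfl⟩

def evalSubalgebra : Subalgebra D (StoneSpace B → D) where
  carrier := Set.range eval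
  mul_mem' := by
    rintro _ _ ⟨f, rfl⟩ ⟨g, rfl⟩
    exact exists_eval_eq_pointwise (· * ·) f g
  add_mem' := by
    rintro _ _ ⟨f, rfl⟩ ⟨g, rfl⟩
    exact exists_eval_eq_pointwise (· + ·) f g
  algebraMap_mem' := exists_eval_eq_const

noncomputable def equivEvalSubalgebra : DBStar D B ≃ evalSubalgebra (D := D) (B := B) :=
  Equiv.ofBijective (fun f => ⟨eval f, f, rfl⟩)
    ⟨fun _ _ h => eval_injective (congrArg Subtype.val h), fun ⟨_, f, hf⟩ => ⟨f, Subtype.ext hf⟩⟩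

noncomputable instance : CommRing (DBStar D B) := equivEvalSubalgebra.commRing

noncomputable instance : Algebra D (DBStar D B) := equivEvalSubalgebra.algebra D

lemma eval_eq_algEquiv (f : DBStar D B) : eval f = Equiv.algEquiv D equivEvalSubalgebra f := rfl

lemma eval_add (f g : DBStar D B) : eval (f + g) = eval f + eval g := by
  simp only [eval_eq_algEquiv, map_add, Subalgebra.coe_add]

lemma eval_mul (f g : DBStar D B) : eval (f * g) = eval f * eval g := by
  simp only [eval_eq_algEquiv, map_mul, Subalgebra.coe_mul]

lemma eval_smul (b : D) (f : DBStar D B) : eval (b • f) = b • eval f := by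
  simp only [eval_eq_algEquiv, map_smul, Subalgebra.coe_smul]

lemma isLUB_apply_of_eval_eq {op : D → D → D} {f g h : DBStar D B}
    (hh : eval h = fun p => op (eval f p) (eval g p)) (a : D) :
    IsLUB {x | ∃ b c, op b c = a ∧ x = f.1 b ⊓ g.1 c} (h.1 a) := by
  have := ((represents_eval f).inf_prod (represents_eval g)).isLUB
    (u := fun z => op z.1 z.2) (hh ▸ represents_eval h) a
  simpa only [Prod.exists] using this

lemma isLUB_smul_apply (b : D) (f : DBStar D B) (a : D) :
    IsLUB {x | ∃ c, b * c = a ∧ x = f.1 c} ((b • f).1 a) :=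
  (represents_eval f).isLUB (u := (b * ·)) (eval_smul b f ▸ represents_eval (b • f) :) a

end DBStar

end BooleanPower

theorem statement1_general (D B : Type*) [CommRing D] [BooleanAlgebra B] :
    ∃ (iR : CommRing (DBStar D B)),
      ∃ (iA : @Algebra D (DBStar D B) _ iR.toSemiring),
        @FosterOps D B _ _ iR iA :=
  ⟨inferInstance, inferInstance,
    fun f g => DBStar.isLUB_apply_of_eval_eq (DBStar.eval_add f g),
    fun f g => DBStar.isLUB_apply_of_eval_eq (DBStar.eval_mul f g),
    DBStar.isLUB_smul_apply⟩

/-- Foster's boolean power `D[B]*` is a commutative unital `D`-algebra,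
with operations given by the boolean-power formulas (as least upper bounds). -/
theorem statement1 (D B : Type*) [CommRing D] [IsDomain D] [BooleanAlgebra B] :
    ∃ (iR : CommRing (DBStar D B)),
      ∃ (iA : @Algebra D (DBStar D B) _ iR.toSemiring),
        @FosterOps D B _ _ iR iA :=
  statement1_general D B
end

section
/- Let D be an integral domain and B a boolean algebra. Let D[B] be the quotient of the polynomial ring D[x_e : e ∈ B] by the ideal generated by x_{e∧f} − x_e x_f, x_{e∨f} − (x_e + x_f − x_e x_f), x_{¬e} − (1 − x_e), and x_0, for e, f ∈ B. Then D[B] is a Specker D-algebra and the map e ↦ (class of x_e) is a boolean isomorphism from B onto Id(D[B]). -/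
open Finset

open MvPolynomial in
/-- The Bergman–Rota ideal defining `D[B]`. -/
noncomputable def SpeckerIdeal (D B : Type*) [CommRing D] [BooleanAlgebra B] : Ideal (MvPolynomial B D) :=
  Ideal.span
    ({p | ∃ e f : B, p = X (e ⊓ f) - X e * X f} ∪
     {p | ∃ e f : B, p = X (e ⊔ f) - (X e + X f - X e * X f)} ∪
     {p | ∃ e : B, p = X eᶜ - (1 - X e)} ∪
     {X ⊥})

/-!
Every element of `D[B]` is a `D`-combination `∑ b σ • x_{a σ}` over the atoms `a σ` of a finite
boolean subalgebra of `B`, which are pairwise disjoint. A prime ideal `J` of `B` gives a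
`D`-algebra map `D[B] → D` sending `x_e` to `0` or `1` according as `e ∈ J` or not; evaluating at
a prime that misses one atom (hence contains all the others) shows that such a combination vanishes
only if its coefficients at the nonzero atoms do. Torsion-freeness and injectivity of `e ↦ x_e`
follow, and an idempotent combination has coefficients in `{0, 1}` because `D` is a domain, so it
is `x_e` for `e` the join of the atoms with coefficient `1`.
-/

namespace Order.Ideal.IsPrime

theorem inf_mem_iff {P : Type*} [SemilatticeInf P] {I : Order.Ideal P} (hI : I.IsPrime)
    {x y : P} : x ⊓ y ∈ I ↔ x ∈ I ∨ y ∈ I :=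
  ⟨hI.mem_or_mem, fun h => h.elim (I.lower inf_le_left) (I.lower inf_le_right)⟩

theorem compl_mem_iff {P : Type*} [BooleanAlgebra P] {I : Order.Ideal P} (hI : I.IsPrime)
    {x : P} : xᶜ ∈ I ↔ x ∉ I :=
  ⟨fun hc hx => hI.top_notMem (sup_compl_eq_top (x := x) ▸ I.sup_mem hx hc),
    hI.compl_mem_of_notMem⟩

end Order.Ideal.IsPrime

theorem DistribLattice.exists_isPrime_mem_notMem {α : Type*} [DistribLattice α] {e f : α}
    (h : ¬ e ≤ f) : ∃ J : Order.Ideal α, J.IsPrime ∧ f ∈ J ∧ e ∉ J := by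
  have hdisj : Disjoint ((Order.PFilter.principal e : Order.PFilter α) : Set α)
      (Order.Ideal.principal f : Set α) :=
    Set.disjoint_left.2 fun _ hxe hxf =>
      h ((Order.PFilter.mem_principal.1 hxe).trans (Order.Ideal.mem_principal.1 hxf))
  obtain ⟨J, hJ, hfJ, heJ⟩ := DistribLattice.prime_ideal_of_disjoint_filter_ideal hdisj
  exact ⟨J, hJ, hfJ Order.Ideal.mem_principal_self,
    Set.disjoint_left.1 heJ (Order.PFilter.mem_principal.2 le_rfl)⟩

section FinsetAtom

variable {B : Type*} [BooleanAlgebra B] [DecidableEq B]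

/-- An atom of the boolean subalgebra generated by `t`, or `⊥`. -/
def finsetAtom (t σ : Finset B) : B := σ.inf id ⊓ (t \ σ).inf compl

theorem finsetAtom_le_of_mem {t σ : Finset B} {e : B} (he : e ∈ σ) : finsetAtom t σ ≤ e :=
  inf_le_left.trans (Finset.inf_le he)

theorem finsetAtom_le_compl_of_mem_sdiff {t σ : Finset B} {e : B} (he : e ∈ t \ σ) :
    finsetAtom t σ ≤ eᶜ :=
  inf_le_right.trans (Finset.inf_le he)

theorem pairwiseDisjoint_finsetAtom (t : Finset B) :
    (t.powerset : Set (Finset B)).PairwiseDisjoint (finsetAtom t) := by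
  have key : ∀ {σ τ : Finset B}, σ ⊆ t → ¬ σ ⊆ τ →
      Disjoint (finsetAtom t σ) (finsetAtom t τ) := by
    intro σ τ hσ hστ
    obtain ⟨e, heσ, heτ⟩ := Finset.not_subset.1 hστ
    exact disjoint_compl_right.mono (finsetAtom_le_of_mem heσ)
      (finsetAtom_le_compl_of_mem_sdiff (Finset.mem_sdiff.2 ⟨hσ heσ, heτ⟩))
  intro σ hσ τ hτ hne
  rw [Finset.mem_coe, Finset.mem_powerset] at hσ hτ
  by_cases hστ : σ ⊆ τ
  · exact (key hτ fun hτσ => hne (Finset.Subset.antisymm hστ hτσ)).symm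
  · exact key hσ hστ

end FinsetAtom

/-- The algebra `D[B]`. -/
abbrev SpeckerAlgebra (D B : Type*) [CommRing D] [BooleanAlgebra B] :=
  MvPolynomial B D ⧸ SpeckerIdeal D B

namespace SpeckerAlgebra

open MvPolynomial

variable (D : Type*) {B : Type*} [CommRing D] [BooleanAlgebra B]

noncomputable def of (e : B) : SpeckerAlgebra D B :=
  Ideal.Quotient.mk (SpeckerIdeal D B) (X e)

variable {D}

theorem of_inf (e f : B) : of D (e ⊓ f) = of D e * of D f := by
  refine sub_eq_zero.1 (Ideal.Quotient.eq_zero_iff_mem.2 (Ideal.subset_span ?_))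
  exact Or.inl (Or.inl (Or.inl ⟨e, f, rfl⟩))

theorem of_sup (e f : B) : of D (e ⊔ f) = of D e + of D f - of D e * of D f := by
  refine sub_eq_zero.1 (Ideal.Quotient.eq_zero_iff_mem.2 (Ideal.subset_span ?_))
  exact Or.inl (Or.inl (Or.inr ⟨e, f, rfl⟩))

theorem of_compl (e : B) : of D eᶜ = 1 - of D e := by
  refine sub_eq_zero.1 (Ideal.Quotient.eq_zero_iff_mem.2 (Ideal.subset_span ?_))
  exact Or.inl (Or.inr ⟨e, rfl⟩)

theorem of_bot : of D (⊥ : B) = 0 :=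
  Ideal.Quotient.eq_zero_iff_mem.2 (Ideal.subset_span (Or.inr rfl))

theorem of_top : of D (⊤ : B) = 1 := by
  rw [← compl_bot, of_compl, of_bot, sub_zero]

theorem isIdempotentElem_of (e : B) : IsIdempotentElem (of D e) := by
  rw [IsIdempotentElem, ← of_inf, inf_idem]

theorem of_mul_of_of_disjoint {e f : B} (h : Disjoint e f) : of D e * of D f = 0 := by
  rw [← of_inf, h.eq_bot, of_bot]

theorem of_sup_of_disjoint {e f : B} (h : Disjoint e f) : of D (e ⊔ f) = of D e + of D f := by
  rw [of_sup, of_mul_of_of_disjoint h, sub_zero]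

theorem of_finset_inf {ι : Type*} (s : Finset ι) (g : ι → B) :
    of D (s.inf g) = ∏ i ∈ s, of D (g i) := by
  classical
  induction s using Finset.induction_on with
  | empty => exact of_top
  | insert i s hi ih => rw [Finset.inf_insert, Finset.prod_insert hi, of_inf, ih]

theorem of_finset_sup {ι : Type*} {s : Finset ι} {g : ι → B}
    (hg : (s : Set ι).PairwiseDisjoint g) : of D (s.sup g) = ∑ i ∈ s, of D (g i) := by
  classical
  induction s using Finset.induction_on with
  | empty => exact of_bot
  | insert i s hi ih =>
    rw [Finset.coe_insert] at hg
    have hdisj : Disjoint (g i) (s.sup g) := Finset.disjoint_sup_right.2 fun j hj =>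
      hg (Set.mem_insert i _) (Set.mem_insert_of_mem i hj) fun hij => hi (hij ▸ hj)
    rw [Finset.sup_insert, Finset.sum_insert hi, of_sup_of_disjoint hdisj,
      ih (hg.subset (Set.subset_insert i _))]

theorem sum_smul_of_mul_sum_smul_of {ι : Type*} {s : Finset ι} {g : ι → B}
    (hg : (s : Set ι).PairwiseDisjoint g) (b c : ι → D) :
    (∑ i ∈ s, b i • of D (g i)) * ∑ i ∈ s, c i • of D (g i) =
      ∑ i ∈ s, (b i * c i) • of D (g i) := by
  rw [Finset.sum_mul_sum]
  refine Finset.sum_congr rfl fun i hi => ?_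
  rw [Finset.sum_eq_single_of_mem i hi fun j hj hji => by
    rw [smul_mul_smul_comm, of_mul_of_of_disjoint (hg hi hj hji.symm), smul_zero]]
  rw [smul_mul_smul_comm, isIdempotentElem_of]

theorem adjoin_range_of : Algebra.adjoin D (Set.range (of D : B → SpeckerAlgebra D B)) = ⊤ := by
  rw [show Set.range (of D : B → SpeckerAlgebra D B) =
      Ideal.Quotient.mkₐ D (SpeckerIdeal D B) '' Set.range X by rw [← Set.range_comp]; rfl,
    ← AlgHom.map_adjoin, adjoin_range_X, Algebra.map_top, AlgHom.range_eq_top]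
  exact Ideal.Quotient.mkₐ_surjective D _

/-- The range of `of` is closed under products, so it spans `D[B]` as a module. -/
theorem span_range_of : Submodule.span D (Set.range (of D : B → SpeckerAlgebra D B)) = ⊤ := by
  let M : Submonoid (SpeckerAlgebra D B) :=
    { carrier := Set.range (of D)
      one_mem' := ⟨⊤, of_top⟩
      mul_mem' := by rintro _ _ ⟨e, rfl⟩ ⟨f, rfl⟩; exact ⟨e ⊓ f, of_inf e f⟩ }
  have h := Algebra.adjoin_eq_span (R := D) (s := Set.range (of D : B → SpeckerAlgebra D B))
  rwa [adjoin_range_of, show Set.range (of D) = (M : Set (SpeckerAlgebra D B)) from rfl,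
    Submonoid.closure_eq, Algebra.top_toSubmodule, eq_comm] at h

section Atoms

variable [DecidableEq B]

theorem of_finsetAtom (t σ : Finset B) :
    of D (finsetAtom t σ) = (∏ e ∈ σ, of D e) * ∏ e ∈ t \ σ, (1 - of D e) := by
  simp only [finsetAtom, of_inf, of_finset_inf, id, of_compl]

theorem sum_of_finsetAtom (t : Finset B) : ∑ σ ∈ t.powerset, of D (finsetAtom t σ) = 1 := by
  simp only [of_finsetAtom, ← Finset.prod_add, add_sub_cancel, Finset.prod_const_one]

theorem of_eq_sum_of_finsetAtom {t : Finset B} {e : B} (he : e ∈ t) :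
    of D e = ∑ σ ∈ t.powerset, if e ∈ σ then of D (finsetAtom t σ) else 0 := by
  rw [← mul_one (of D e), ← sum_of_finsetAtom (D := D) t, Finset.mul_sum]
  refine Finset.sum_congr rfl fun σ _ => ?_
  rw [← of_inf]
  split_ifs with heσ
  · rw [inf_eq_right.2 (finsetAtom_le_of_mem heσ)]
  · rw [(disjoint_compl_right.mono_right
      (finsetAtom_le_compl_of_mem_sdiff (Finset.mem_sdiff.2 ⟨he, heσ⟩))).eq_bot, of_bot]

theorem exists_eq_sum_smul_of_finsetAtom (s : SpeckerAlgebra D B) :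
    ∃ (t : Finset B) (b : Finset B → D),
      s = ∑ σ ∈ t.powerset, b σ • of D (finsetAtom t σ) := by
  have hs : s ∈ Submodule.span D (Set.range (of D)) := by
    rw [span_range_of]
    exact Submodule.mem_top
  obtain ⟨c, rfl⟩ := Finsupp.mem_span_range_iff_exists_finsupp.1 hs
  refine ⟨c.support, fun σ => ∑ e ∈ c.support, if e ∈ σ then c e else 0, ?_⟩
  simp only [Finsupp.sum, Finset.sum_smul, ite_smul, zero_smul]
  rw [Finset.sum_comm]
  refine Finset.sum_congr rfl fun e he => ?_
  rw [of_eq_sum_of_finsetAtom he, Finset.smul_sum]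
  exact Finset.sum_congr rfl fun σ _ => by split_ifs <;> simp

end Atoms

section Lift

variable {A : Type*} [CommRing A] [Algebra D A]

theorem speckerIdeal_le_ker_aeval (χ : B → A) (hinf : ∀ e f, χ (e ⊓ f) = χ e * χ f)
    (hcompl : ∀ e, χ eᶜ = 1 - χ e) (hbot : χ ⊥ = 0) :
    SpeckerIdeal D B ≤ RingHom.ker (aeval χ : MvPolynomial B D →ₐ[D] A) := by
  have hsup : ∀ e f, χ (e ⊔ f) = χ e + χ f - χ e * χ f := fun e f => by
    rw [← compl_compl (e ⊔ f), compl_sup, hcompl, hinf, hcompl, hcompl]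
    ring
  refine Ideal.span_le.2 ?_
  rintro q (((⟨e, f, rfl⟩ | ⟨e, f, rfl⟩) | ⟨e, rfl⟩) | rfl) <;>
    simp [RingHom.mem_ker, hinf, hsup, hcompl, hbot]

noncomputable def lift (χ : B → A) (hinf : ∀ e f, χ (e ⊓ f) = χ e * χ f)
    (hcompl : ∀ e, χ eᶜ = 1 - χ e) (hbot : χ ⊥ = 0) : SpeckerAlgebra D B →ₐ[D] A :=
  Ideal.Quotient.liftₐ _ (aeval χ) fun _ hp =>
    RingHom.mem_ker.1 (speckerIdeal_le_ker_aeval χ hinf hcompl hbot hp)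

@[simp]
theorem lift_of (χ : B → A) (hinf : ∀ e f, χ (e ⊓ f) = χ e * χ f)
    (hcompl : ∀ e, χ eᶜ = 1 - χ e) (hbot : χ ⊥ = 0) (e : B) :
    lift χ hinf hcompl hbot (of D e) = χ e :=
  aeval_X χ e

end Lift

section Evaluation

variable (D) in
open Classical in
noncomputable def notMemIndicator (J : Order.Ideal B) (e : B) : D := if e ∈ J then 0 else 1

variable {J : Order.Ideal B}

/-- Evaluation at the point of the Stone space of `B` given by a prime ideal `J`. -/
noncomputable def evalAt (hJ : J.IsPrime) : SpeckerAlgebra D B →ₐ[D] D :=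
  lift (notMemIndicator D J)
    (fun e f => by
      by_cases he : e ∈ J <;> by_cases hf : f ∈ J <;>
        simp [notMemIndicator, hJ.inf_mem_iff, he, hf])
    (fun e => by by_cases he : e ∈ J <;> simp [notMemIndicator, hJ.compl_mem_iff, he])
    (by simp [notMemIndicator, J.bot_mem])

theorem evalAt_of_of_mem (hJ : J.IsPrime) {e : B} (he : e ∈ J) : evalAt hJ (of D e) = 0 := by
  simp [evalAt, notMemIndicator, he]

theorem evalAt_of_of_notMem (hJ : J.IsPrime) {e : B} (he : e ∉ J) : evalAt hJ (of D e) = 1 := by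
  simp [evalAt, notMemIndicator, he]

end Evaluation

/-- Linear independence of a disjoint family: evaluate at a prime ideal missing `g i`, which then
contains every other `g j`. -/
theorem sum_smul_of_eq_zero_iff {ι : Type*} {s : Finset ι} {g : ι → B}
    (hg : (s : Set ι).PairwiseDisjoint g) (b : ι → D) :
    ∑ i ∈ s, b i • of D (g i) = 0 ↔ ∀ i ∈ s, g i ≠ ⊥ → b i = 0 := by
  refine ⟨fun h i hi hgi => ?_, fun h => Finset.sum_eq_zero fun i hi => ?_⟩
  · obtain ⟨J, hJ, -, hiJ⟩ := DistribLattice.exists_isPrime_mem_notMem (mt le_bot_iff.1 hgi)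
    have hJ0 := congrArg (evalAt hJ) h
    rwa [map_sum, map_zero, Finset.sum_eq_single_of_mem i hi, map_smul,
      evalAt_of_of_notMem hJ hiJ, smul_eq_mul, mul_one] at hJ0
    intro j hj hji
    have hjJ : g j ∈ J :=
      (hJ.inf_mem_iff.1 ((hg hj hi hji).eq_bot ▸ J.bot_mem)).resolve_right hiJ
    rw [map_smul, evalAt_of_of_mem hJ hjJ, smul_zero]
  · by_cases hgi : g i = ⊥
    · rw [hgi, of_bot, smul_zero]
    · rw [h i hi hgi, zero_smul]

theorem of_injective [Nontrivial D] : Function.Injective (of D : B → SpeckerAlgebra D B) := by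
  have hle : ∀ {e f : B}, of D e = of D f → e ≤ f := fun {e f} h => by
    by_contra hef
    obtain ⟨J, hJ, hfJ, heJ⟩ := DistribLattice.exists_isPrime_mem_notMem hef
    have := congrArg (evalAt hJ) h
    rw [evalAt_of_of_notMem hJ heJ, evalAt_of_of_mem hJ hfJ] at this
    exact one_ne_zero this
  exact fun e f h => le_antisymm (hle h) (hle h.symm)

theorem spTorsionFree [IsDomain D] : SpTorsionFree D (SpeckerAlgebra D B) := by
  classical
  intro a s has
  refine or_iff_not_imp_left.2 fun ha => ?_
  obtain ⟨t, b, rfl⟩ := exists_eq_sum_smul_of_finsetAtom s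
  have hdisj := pairwiseDisjoint_finsetAtom t
  simp only [Finset.smul_sum, smul_smul] at has
  rw [sum_smul_of_eq_zero_iff hdisj] at has ⊢
  exact fun σ hσ hne => (mul_eq_zero.1 (has σ hσ hne)).resolve_left ha

theorem spIdemGenerated : SpIdemGenerated D (SpeckerAlgebra D B) :=
  top_le_iff.1 (adjoin_range_of.symm.le.trans
    (Algebra.adjoin_mono (Set.range_subset_iff.2 isIdempotentElem_of)))

/-- An idempotent `∑ b σ • of (a σ)` over the atoms has `b σ ∈ {0, 1}`, so it is the image of the
join of the atoms with `b σ = 1`. -/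
theorem exists_of_eq_of_isIdempotentElem [IsDomain D] {x : SpeckerAlgebra D B}
    (hx : IsIdempotentElem x) : ∃ e, of D e = x := by
  classical
  obtain ⟨t, b, rfl⟩ := exists_eq_sum_smul_of_finsetAtom x
  have hdisj := pairwiseDisjoint_finsetAtom t
  have hb : ∀ σ ∈ t.powerset, finsetAtom t σ ≠ ⊥ → b σ = 0 ∨ b σ = 1 := by
    have h := sub_eq_zero.2 hx
    rw [sum_smul_of_mul_sum_smul_of hdisj, ← Finset.sum_sub_distrib] at h
    simp only [← sub_smul] at h
    exact fun σ hσ hne => IsIdempotentElem.iff_eq_zero_or_one.1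
      (sub_eq_zero.1 ((sum_smul_of_eq_zero_iff hdisj _).1 h σ hσ hne))
  refine ⟨(t.powerset.filter fun σ => b σ = 1).sup (finsetAtom t), ?_⟩
  rw [of_finset_sup (hdisj.subset (Finset.coe_subset.2 (Finset.filter_subset _ _))),
    Finset.sum_filter]
  refine Finset.sum_congr rfl fun σ hσ => ?_
  by_cases hne : finsetAtom t σ = ⊥
  · simp [hne, of_bot]
  · rcases hb σ hσ hne with h | h <;> simp [h]

end SpeckerAlgebra

/-- `D[B]` is a Specker `D`-algebra and `e ↦ [x_e]` is a boolean
isomorphism of `B` onto the idempotents of `D[B]`. -/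
theorem statement3 (D B : Type*) [CommRing D] [IsDomain D] [BooleanAlgebra B] :
    IsSpecker D (MvPolynomial B D ⧸ SpeckerIdeal D B) ∧
    (let φ : B → MvPolynomial B D ⧸ SpeckerIdeal D B :=
      fun e => Ideal.Quotient.mk (SpeckerIdeal D B) (MvPolynomial.X e)
     (∀ e, IsIdempotentElem (φ e)) ∧
     Function.Injective φ ∧
     (∀ x, IsIdempotentElem x → ∃ e, φ e = x) ∧
     (∀ e f, φ (e ⊓ f) = φ e * φ f) ∧
     (∀ e f, φ (e ⊔ f) = φ e + φ f - φ e * φ f) ∧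
     (∀ e, φ eᶜ = 1 - φ e) ∧
     φ ⊥ = 0 ∧ φ ⊤ = 1) :=
  ⟨⟨SpeckerAlgebra.spTorsionFree, SpeckerAlgebra.spIdemGenerated⟩,
    SpeckerAlgebra.isIdempotentElem_of, SpeckerAlgebra.of_injective,
    fun _ => SpeckerAlgebra.exists_of_eq_of_isIdempotentElem, SpeckerAlgebra.of_inf,
    SpeckerAlgebra.of_sup, SpeckerAlgebra.of_compl, SpeckerAlgebra.of_bot, SpeckerAlgebra.of_top⟩
end

section
/- Let D be a totally ordered integral domain and S a Specker D-algebra ordered by: s ≤ t iff t − s has an orthogonal decomposition with nonnegative coefficients. If s = Σ_i a_i e_i and t = Σ_i b_i e_i are orthogonal decompositions with the same pairwise orthogonal idempotents e_i, then the lattice join and meet of s and t exist in S and are given by s ∨ t = Σ_i max(a_i, b_i) e_i and s ∧ t = Σ_i min(a_i, b_i) e_i. -/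
open Finset

/-!
Put `f = ∑ {e i | a i ≤ b i}`. The candidate join is `s + f * (t - s)` and the candidate
meet `t + f * (s - t)`. If `s ≤ v` and `t ≤ v`, then
`v - (s + f * (t - s)) = (1 - f) * (v - s) + f * (v - t)`; multiplying nonnegative
orthogonal decompositions of `v - s` and `v - t` by the orthogonal idempotents `1 - f` and `f`
and merging them gives one of the difference. Meets are dual.
-/

namespace OrthogonalIdempotents

variable {D S : Type*} [CommRing D] [CommRing S] [Algebra D S]
variable {ι : Type*} [Fintype ι] {e : ι → S}

lemma sum_mul_sum_smul (he : OrthogonalIdempotents e) (A : Finset ι) (c : ι → D) :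
    (∑ i ∈ A, e i) * ∑ j, c j • e j = ∑ i ∈ A, c i • e i := by
  classical
  simp [Finset.sum_mul, Finset.mul_sum, he.mul_eq]

lemma sum_piecewise_smul (he : OrthogonalIdempotents e) (A : Finset ι)
    [DecidablePred (· ∈ A)] (c d : ι → D) :
    ∑ i, A.piecewise c d i • e i =
      ∑ i, d i • e i + (∑ i ∈ A, e i) * (∑ i, c i • e i - ∑ i, d i • e i) := by
  classical
  have hA : ∑ i ∈ A, A.piecewise c d i • e i = ∑ i ∈ A, c i • e i :=
    Finset.sum_congr rfl fun i hi => by rw [A.piecewise_eq_of_mem c d hi]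
  have hAc : ∑ i ∈ Aᶜ, A.piecewise c d i • e i = ∑ i ∈ Aᶜ, d i • e i :=
    Finset.sum_congr rfl fun i hi => by
      rw [A.piecewise_eq_of_notMem c d (Finset.mem_compl.1 hi)]
  rw [mul_sub, he.sum_mul_sum_smul, he.sum_mul_sum_smul, ← Finset.sum_add_sum_compl A,
    ← Finset.sum_add_sum_compl A fun i => d i • e i, hA, hAc]
  abel

end OrthogonalIdempotents

section Order

variable {D S : Type*} [CommRing D] [LinearOrder D] [IsStrictOrderedRing D] [CommRing S]
  [Algebra D S]

lemma orthNonnegDecomp_sum_smul {ι : Type*} [Fintype ι] {c : ι → D} {e : ι → S}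
    (hc : ∀ i, 0 ≤ c i) (he : OrthogonalIdempotents e) :
    OrthNonnegDecomp D S (∑ i, c i • e i) := by
  let φ := (Fintype.equivFin ι).symm
  exact ⟨Fintype.card ι, c ∘ φ, e ∘ φ, fun i => hc _, fun i => he.idem _,
    fun i j hij => he.ortho (φ.injective.ne hij), (φ.sum_comp fun i => c i • e i).symm⟩

lemma OrthNonnegDecomp.mul_add_mul {E F x y : S} (hx : OrthNonnegDecomp D S x)
    (hy : OrthNonnegDecomp D S y) (hE : IsIdempotentElem E) (hF : IsIdempotentElem F)
    (hEF : E * F = 0) : OrthNonnegDecomp D S (E * x + F * y) := by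
  obtain ⟨m, c, f, hc, hf, hfo, rfl⟩ := hx
  obtain ⟨n, d, g, hd, hg, hgo, rfl⟩ := hy
  have hsum : E * ∑ i, c i • f i + F * ∑ j, d j • g j =
      ∑ k, Sum.elim c d k • Sum.elim (E * f ·) (F * g ·) k := by
    simp [Fintype.sum_sum_type, Finset.mul_sum]
  have hFE : F * E = 0 := by rw [mul_comm, hEF]
  rw [hsum]
  refine orthNonnegDecomp_sum_smul (by rintro (i | j) <;> simp [hc, hd]) ⟨?_, ?_⟩
  · rintro (i | j)
    · exact hE.mul (hf i)
    · exact hF.mul (hg j)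
  · rintro (i | j) (i' | j') hne <;> simp only [Sum.elim_inl, Sum.elim_inr] <;>
      rw [mul_mul_mul_comm]
    · rw [hfo i i' (by simpa using hne), mul_zero]
    · rw [hEF, zero_mul]
    · rw [hFE, zero_mul]
    · rw [hgo j j' (by simpa using hne), mul_zero]

lemma OrthNonnegDecomp.one_sub_mul_add_mul {f x y : S} (hx : OrthNonnegDecomp D S x)
    (hy : OrthNonnegDecomp D S y) (hf : IsIdempotentElem f) :
    OrthNonnegDecomp D S ((1 - f) * x + f * y) :=
  hx.mul_add_mul hy hf.one_sub hf (by rw [sub_mul, one_mul, hf.eq, sub_self])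

lemma add_mul_sub_specLE_of_specLE {f s t v : S} (hf : IsIdempotentElem f)
    (hs : specLE D S s v) (ht : specLE D S t v) : specLE D S (s + f * (t - s)) v := by
  have h := hs.one_sub_mul_add_mul ht hf
  unfold specLE
  convert h using 1
  ring

lemma specLE_add_mul_sub_of_specLE {f s t v : S} (hf : IsIdempotentElem f)
    (hs : specLE D S v s) (ht : specLE D S v t) : specLE D S v (s + f * (t - s)) := by
  have h := hs.one_sub_mul_add_mul ht hf
  unfold specLE
  convert h using 1
  ring

lemma specLE_sum_smul_of_le {ι : Type*} [Fintype ι] {e : ι → S} (he : OrthogonalIdempotents e)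
    {a b : ι → D} (hab : ∀ i, a i ≤ b i) : specLE D S (∑ i, a i • e i) (∑ i, b i • e i) := by
  unfold specLE
  simp_rw [← Finset.sum_sub_distrib, ← sub_smul]
  exact orthNonnegDecomp_sum_smul (fun i => sub_nonneg.2 (hab i)) he

end Order

theorem statement5_general (D S : Type*) [CommRing D] [LinearOrder D] [IsStrictOrderedRing D] [CommRing S] [Algebra D S]
    {n : ℕ} (a b : Fin n → D) (e : Fin n → S)
    (hidem : ∀ i, IsIdempotentElem (e i)) (horth : ∀ i j, i ≠ j → e i * e j = 0)
    (s t : S) (hs : s = ∑ i, a i • e i) (ht : t = ∑ i, b i • e i) :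
    relIsLUB (specLE D S) {s, t} (∑ i, max (a i) (b i) • e i) ∧
    relIsGLB (specLE D S) {s, t} (∑ i, min (a i) (b i) • e i) := by
  have he : OrthogonalIdempotents e := ⟨hidem, horth⟩
  let A := Finset.univ.filter fun i => a i ≤ b i
  have hf : IsIdempotentElem (∑ i ∈ A, e i) := he.isIdempotentElem_sum
  have hmax : ∑ i, max (a i) (b i) • e i = s + (∑ i ∈ A, e i) * (t - s) := by
    simp only [hs, ht, ← he.sum_piecewise_smul, Finset.piecewise, A, Finset.mem_filter,
      Finset.mem_univ, true_and, max_def]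
  have hmin : ∑ i, min (a i) (b i) • e i = t + (∑ i ∈ A, e i) * (s - t) := by
    simp only [hs, ht, ← he.sum_piecewise_smul, Finset.piecewise, A, Finset.mem_filter,
      Finset.mem_univ, true_and, min_def]
  refine ⟨⟨?_, fun v hv => ?_⟩, ⟨?_, fun v hv => ?_⟩⟩
  · rintro x (rfl | rfl)
    · exact hs ▸ specLE_sum_smul_of_le he fun i => le_max_left _ _
    · exact ht ▸ specLE_sum_smul_of_le he fun i => le_max_right _ _
  · exact hmax ▸ add_mul_sub_specLE_of_specLE hf (hv s (by simp)) (hv t (by simp))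
  · rintro x (rfl | rfl)
    · exact hs ▸ specLE_sum_smul_of_le he fun i => min_le_left _ _
    · exact ht ▸ specLE_sum_smul_of_le he fun i => min_le_right _ _
  · exact hmin ▸ specLE_add_mul_sub_of_specLE hf (hv t (by simp)) (hv s (by simp))

/-- joins and meets of elements with compatible orthogonal decompositions,
with respect to the order `s ≤ t ↔ t − s` has a nonnegative orthogonal decomposition. -/
theorem statement5 (D S : Type*) [CommRing D] [LinearOrder D] [IsStrictOrderedRing D] [CommRing S] [Algebra D S]
    (hS : IsSpecker D S) {n : ℕ} (a b : Fin n → D) (e : Fin n → S)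
    (hidem : ∀ i, IsIdempotentElem (e i)) (horth : ∀ i j, i ≠ j → e i * e j = 0)
    (s t : S) (hs : s = ∑ i, a i • e i) (ht : t = ∑ i, b i • e i) :
    relIsLUB (specLE D S) {s, t} (∑ i, max (a i) (b i) • e i) ∧
    relIsGLB (specLE D S) {s, t} (∑ i, min (a i) (b i) • e i) :=
  statement5_general D S a b e hidem horth s t hs ht
end

section
/- Let D be a totally ordered integral domain, B a boolean algebra, and D[B]* the boolean power with the f-algebra ordering. Then for f, g ∈ D[B]*: f ≥ 0 if and only if f(a) = 0 for every a < 0 in D; consequently f ≤ g iff (g − f)(a) = 0 for all a < 0. -/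
open Finset

/-!
Write `χ_b ∈ D[B]*` for the idempotent equal to `1` on `b` and `0` on `bᶜ`; the Foster
operations give `χ_b χ_c = χ_{b ⊓ c}`, so disjoint `b, c` give orthogonal idempotents. Every
`f ∈ D[B]*` is the finite sum `∑_{a ≠ 0} a • χ_{f(a)}`, and if `f` vanishes at the negative
elements of `D` all the coefficients of this orthogonal decomposition are positive.

Conversely, an idempotent `e` vanishes at every `t < 0`: `e(t)` is the join of
`e(p) ⊓ e(q)` over `pq = t`, the values of `e` at distinct points are disjoint, and `p² ≥ 0`.
Vanishing at the negative elements is preserved by nonnegative scalars and by sums.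
-/

theorem orthNonnegDecomp_sum {D S ι : Type*} [CommRing D] [LinearOrder D] [IsStrictOrderedRing D]
    [CommRing S] [Algebra D S] (s : Finset ι) (a : ι → D) (e : ι → S) (ha : ∀ i ∈ s, 0 ≤ a i)
    (he : ∀ i ∈ s, IsIdempotentElem (e i)) (horth : ∀ i ∈ s, ∀ j ∈ s, i ≠ j → e i * e j = 0) :
    OrthNonnegDecomp D S (∑ i ∈ s, a i • e i) := by
  refine ⟨s.card, fun k => a (s.equivFin.symm k), fun k => e (s.equivFin.symm k),
    fun k => ha _ (s.equivFin.symm k).2, fun k => he _ (s.equivFin.symm k).2,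
    fun k l hkl => horth _ (s.equivFin.symm k).2 _ (s.equivFin.symm l).2 ?_, ?_⟩
  · exact fun h => hkl (s.equivFin.symm.injective (Subtype.ext h))
  · rw [← s.sum_coe_sort, ← s.equivFin.symm.sum_comp]

namespace DBStar

open scoped Classical

section Values

variable {D B : Type*} [CommRing D] [BooleanAlgebra B]

theorem ext {f g : DBStar D B} (h : ∀ t, f.1 t = g.1 t) : f = g :=
  Subtype.ext (funext h)

theorem apply_inf_apply (f : DBStar D B) {s t : D} (h : s ≠ t) : f.1 s ⊓ f.1 t = ⊥ :=
  f.2.2.1 s t h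

theorem finite_support (f : DBStar D B) : {t | f.1 t ≠ ⊥}.Finite := by
  refine Set.Finite.of_finite_image (f.2.1.subset (Set.image_subset_range _ _)) ?_
  intro s hs t _ hst
  by_contra hne
  have := f.apply_inf_apply hne
  rw [hst, inf_idem] at this
  exact hs (hst ▸ this)

theorem apply_eq_compl_sup (f : DBStar D B) {t : D} {s : Finset D} (ht : t ∉ s)
    (hs : ∀ x, x ≠ t → x ∉ s → f.1 x = ⊥) : f.1 t = (s.sup f.1)ᶜ := by
  refine eq_compl_iff_isCompl.mpr ⟨?_, codisjoint_iff.mpr (top_le_iff.mp (f.2.2.2.2 ?_))⟩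
  · exact Finset.disjoint_sup_right.mpr fun x hx =>
      disjoint_iff.mpr (f.apply_inf_apply fun h => ht (h ▸ hx))
  · rintro _ ⟨x, rfl⟩
    by_cases hxt : x = t
    · exact hxt ▸ le_sup_left
    by_cases hxs : x ∈ s
    · exact (Finset.le_sup hxs).trans le_sup_right
    · exact (hs x hxt hxs).symm ▸ bot_le

variable [Nontrivial D]

noncomputable def chi (b : B) : DBStar D B :=
  ⟨fun t => if t = 0 then bᶜ else if t = 1 then b else ⊥, by
    refine ⟨?_, ?_, ?_, ?_⟩
    · refine (((Set.finite_singleton (⊥ : B)).insert b).insert bᶜ).subset ?_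
      rintro _ ⟨t, rfl⟩
      dsimp only
      split_ifs <;> simp
    · intro s t hst
      dsimp only
      split_ifs <;> simp_all
    · rintro _ ⟨t, rfl⟩
      exact le_top
    · intro v hv
      have hb : b ≤ v := by simpa using hv ⟨1, rfl⟩
      have hbc : bᶜ ≤ v := by simpa using hv ⟨0, rfl⟩
      exact sup_compl_eq_top.symm.le.trans (sup_le hb hbc)⟩

theorem chi_apply (b : B) (t : D) :
    (chi b : DBStar D B).1 t = if t = 0 then bᶜ else if t = 1 then b else ⊥ :=
  rfl

end Values

variable {D B : Type*} [CommRing D] [BooleanAlgebra B]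
  [CommRing (DBStar D B)] [Algebra D (DBStar D B)]

theorem zero_apply (hF : FosterOps D B) (t : D) :
    (0 : DBStar D B).1 t = if t = 0 then ⊤ else ⊥ := by
  have h := hF.2.2 0 (0 : DBStar D B) t
  rw [zero_smul] at h
  split_ifs with ht
  · subst ht
    have hrange : {x | ∃ c : D, 0 * c = 0 ∧ x = (0 : DBStar D B).1 c} =
        Set.range (0 : DBStar D B).1 := by
      ext
      simp [eq_comm]
    exact h.unique (hrange ▸ (0 : DBStar D B).2.2.2)
  · refine le_bot_iff.mp (h.2 ?_)
    rintro _ ⟨c, hc, rfl⟩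
    exact absurd (by simpa using hc.symm) ht

theorem add_apply_of_orthogonal (hF : FosterOps D B) {f g : DBStar D B}
    (h : ∀ p q, p ≠ 0 → q ≠ 0 → f.1 p ⊓ g.1 q = ⊥) (t : D) :
    (f + g).1 t = f.1 t ⊓ g.1 0 ⊔ f.1 0 ⊓ g.1 t := by
  refine (hF.1 f g t).unique ⟨?_, fun v hv =>
    sup_le (hv ⟨t, 0, add_zero t, rfl⟩) (hv ⟨0, t, zero_add t, rfl⟩)⟩
  rintro _ ⟨p, q, rfl, rfl⟩
  by_cases hp : p = 0
  · subst hp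
    simp
  by_cases hq : q = 0
  · subst hq
    simp
  · simp [h p q hp hq]

section Nontrivial

variable [Nontrivial D]

theorem chi_mul_chi (hF : FosterOps D B) (b c : B) :
    (chi b : DBStar D B) * chi c = chi (b ⊓ c) := by
  refine ext fun t => (hF.2.1 _ _ t).unique ⟨?_, fun v hv => ?_⟩
  · rintro _ ⟨p, q, rfl, rfl⟩
    simp only [chi_apply]
    split_ifs <;> simp_all
  · rw [chi_apply]
    split_ifs with h0 h1
    · subst h0
      have h00 : bᶜ ⊓ cᶜ ≤ v := hv ⟨0, 0, by simp, by simp [chi_apply]⟩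
      have h01 : bᶜ ⊓ c ≤ v := hv ⟨0, 1, by simp, by simp [chi_apply]⟩
      have h10 : b ⊓ cᶜ ≤ v := hv ⟨1, 0, by simp, by simp [chi_apply]⟩
      rw [compl_inf]
      refine sup_le (sup_inf_inf_compl.symm.le.trans (sup_le h01 h00)) ?_
      rw [← sup_inf_inf_compl (x := cᶜ) (y := b), inf_comm, inf_comm cᶜ]
      exact sup_le h10 h00
    · subst h1
      exact hv ⟨1, 1, by simp, by simp [chi_apply]⟩
    · exact bot_le

theorem chi_isIdempotentElem (hF : FosterOps D B) (b : B) :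
    IsIdempotentElem (chi b : DBStar D B) := by
  rw [IsIdempotentElem, chi_mul_chi hF, inf_idem]

theorem chi_mul_chi_of_disjoint (hF : FosterOps D B) {b c : B} (h : b ⊓ c = ⊥) :
    (chi b : DBStar D B) * chi c = 0 := by
  refine ext fun t => ?_
  rw [chi_mul_chi hF, h, chi_apply, zero_apply hF]
  split_ifs <;> simp

theorem smul_chi_apply (hF : FosterOps D B) {j : D} (hj : j ≠ 0) (b : B) (t : D) :
    (j • chi b : DBStar D B).1 t = if t = j then b else if t = 0 then bᶜ else ⊥ := by
  refine (hF.2.2 j (chi b) t).unique ⟨?_, fun v hv => ?_⟩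
  · rintro _ ⟨c, rfl, rfl⟩
    simp only [chi_apply]
    split_ifs <;> simp_all
  · split_ifs with htj ht0
    · exact hv ⟨1, by rw [mul_one, htj], by simp [chi_apply]⟩
    · exact hv ⟨0, by rw [mul_zero, ht0], by simp [chi_apply]⟩
    · exact bot_le

theorem sum_smul_chi_apply (hF : FosterOps D B) (h : D → B) {s : Finset D} (hs : 0 ∉ s)
    (hdisj : (s : Set D).PairwiseDisjoint h) (t : D) :
    (∑ x ∈ s, x • chi (h x) : DBStar D B).1 t =
      if t ∈ s then h t else if t = 0 then (s.sup h)ᶜ else ⊥ := by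
  induction s using Finset.induction_on generalizing t with
  | empty => simp [zero_apply hF]
  | insert j s hjs ih =>
    have hj : j ≠ 0 := fun e => hs (e ▸ mem_insert_self j s)
    have h0s : 0 ∉ s := fun e => hs (mem_insert_of_mem e)
    have hsum := ih h0s (hdisj.subset (coe_subset.mpr (subset_insert j s)))
    have hdisj_j : ∀ x ∈ s, Disjoint (h j) (h x) := fun x hx =>
      hdisj (mem_insert_self j s) (mem_insert_of_mem hx) fun e => hjs (e ▸ hx)
    have horth : ∀ p q, p ≠ 0 → q ≠ 0 → (j • chi (h j) : DBStar D B).1 p ⊓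
        (∑ x ∈ s, x • chi (h x) : DBStar D B).1 q = ⊥ := by
      intro p q hp hq
      rw [smul_chi_apply hF hj, hsum]
      by_cases hpj : p = j
      · by_cases hqs : q ∈ s
        · simp [hpj, hqs, (hdisj_j q hqs).eq_bot]
        · simp [hq, hpj, hqs]
      · simp [hp, hpj]
    rw [sum_insert hjs, add_apply_of_orthogonal hF horth, smul_chi_apply hF hj,
      smul_chi_apply hF hj, hsum, hsum]
    simp only [if_neg h0s, if_neg hj.symm]
    by_cases htj : t = j
    · subst htj
      simpa [hjs, hj] using fun x hx => (hdisj_j x hx).le_compl_right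
    by_cases hts : t ∈ s
    · have ht0 : t ≠ 0 := fun e => h0s (e ▸ hts)
      simp [htj, hts, ht0, (hdisj_j t hts).symm.le_compl_right]
    by_cases ht0 : t = 0
    · subst ht0
      simp [h0s, hj.symm]
    · simp [htj, hts, ht0]

end Nontrivial

section Ordered

variable [LinearOrder D] [IsStrictOrderedRing D]

theorem mul_self_apply_of_neg (hF : FosterOps D B) (f : DBStar D B) {t : D} (ht : t < 0) :
    (f * f).1 t = ⊥ := by
  refine le_bot_iff.mp ((hF.2.1 f f t).2 ?_)
  rintro _ ⟨p, q, rfl, rfl⟩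
  rcases eq_or_ne p q with rfl | hpq
  · exact absurd ht (mul_self_nonneg p).not_gt
  · exact (f.apply_inf_apply hpq).le

theorem apply_of_neg_of_isIdempotentElem (hF : FosterOps D B) {e : DBStar D B}
    (he : IsIdempotentElem e) {t : D} (ht : t < 0) : e.1 t = ⊥ := by
  rw [← he.eq]
  exact mul_self_apply_of_neg hF e ht

theorem smul_apply_of_neg (hF : FosterOps D B) {a : D} (ha : 0 ≤ a) {f : DBStar D B}
    (hf : ∀ t < 0, f.1 t = ⊥) {t : D} (ht : t < 0) : (a • f).1 t = ⊥ := by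
  refine le_bot_iff.mp ((hF.2.2 a f t).2 ?_)
  rintro _ ⟨c, rfl, rfl⟩
  exact (hf c (neg_of_mul_neg_right ht ha)).le

theorem add_apply_of_neg (hF : FosterOps D B) {f g : DBStar D B} (hf : ∀ t < 0, f.1 t = ⊥)
    (hg : ∀ t < 0, g.1 t = ⊥) {t : D} (ht : t < 0) : (f + g).1 t = ⊥ := by
  refine le_bot_iff.mp ((hF.1 f g t).2 ?_)
  rintro _ ⟨p, q, rfl, rfl⟩
  rcases lt_or_ge p 0 with hp | hp
  · simp [hf p hp]
  · simp [hg q (by linarith)]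

theorem apply_of_neg_of_orthNonnegDecomp (hF : FosterOps D B) {f : DBStar D B}
    (hf : OrthNonnegDecomp D (DBStar D B) f) {t : D} (ht : t < 0) : f.1 t = ⊥ := by
  obtain ⟨n, a, e, ha, he, -, rfl⟩ := hf
  refine Finset.sum_induction _ (fun g : DBStar D B => ∀ t < 0, g.1 t = ⊥)
    (fun _ _ hf hg _ ht => add_apply_of_neg hF hf hg ht)
    (fun _ ht => by simp [zero_apply hF, ht.ne])
    (fun i _ _ ht => smul_apply_of_neg hF (ha i)
      (fun _ hs => apply_of_neg_of_isIdempotentElem hF (he i) hs) ht) t ht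

theorem orthNonnegDecomp_of_apply_of_neg (hF : FosterOps D B) (f : DBStar D B)
    (hf : ∀ t < 0, f.1 t = ⊥) : OrthNonnegDecomp D (DBStar D B) f := by
  set T := f.finite_support.toFinset.erase 0
  have hT : ∀ x, x ∈ T ↔ x ≠ 0 ∧ f.1 x ≠ ⊥ := by simp [T]
  have hT_pos : ∀ x ∈ T, 0 < x := fun x hx =>
    lt_of_le_of_ne (not_lt.mp fun hlt => ((hT x).mp hx).2 (hf x hlt)) ((hT x).mp hx).1.symm
  have hT_disj : (T : Set D).PairwiseDisjoint f.1 := fun x _ y _ hxy =>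
    disjoint_iff.mpr (f.apply_inf_apply hxy)
  have hf_eq : f = ∑ x ∈ T, x • chi (f.1 x) := by
    refine ext fun t => ?_
    rw [sum_smul_chi_apply hF f.1 (by simp [T]) hT_disj]
    split_ifs with htT ht0
    · rfl
    · subst ht0
      exact f.apply_eq_compl_sup (by simp [T]) fun x hx0 hxT =>
        not_not.mp fun hx => hxT ((hT x).mpr ⟨hx0, hx⟩)
    · exact not_not.mp fun ht => htT ((hT t).mpr ⟨ht0, ht⟩)
  rw [hf_eq]
  exact orthNonnegDecomp_sum T _ _ (fun x hx => (hT_pos x hx).le)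
    (fun _ _ => chi_isIdempotentElem hF _)
    (fun _ _ _ _ hxy => chi_mul_chi_of_disjoint hF (f.apply_inf_apply hxy))

theorem orthNonnegDecomp_iff (hF : FosterOps D B) (f : DBStar D B) :
    OrthNonnegDecomp D (DBStar D B) f ↔ ∀ t < 0, f.1 t = ⊥ :=
  ⟨fun hf _ => apply_of_neg_of_orthNonnegDecomp hF hf, orthNonnegDecomp_of_apply_of_neg hF f⟩

end Ordered

end DBStar

/-- in `D[B]*` with its f-algebra order, `f ≥ 0` iff `f(a) = ⊥` for all
`a < 0`; consequently `f ≤ g` iff `(g − f)(a) = ⊥` for all `a < 0`. -/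
theorem statement7 (D B : Type*) [CommRing D] [LinearOrder D] [IsStrictOrderedRing D] [BooleanAlgebra B]
    [CommRing (DBStar D B)] [Algebra D (DBStar D B)] (hF : FosterOps D B) :
    (∀ f : DBStar D B, OrthNonnegDecomp D (DBStar D B) f ↔ ∀ a : D, a < 0 → f.1 a = ⊥) ∧
    (∀ f g : DBStar D B, specLE D (DBStar D B) f g ↔ ∀ a : D, a < 0 → (g - f).1 a = ⊥) :=
  ⟨DBStar.orthNonnegDecomp_iff hF, fun f g => DBStar.orthNonnegDecomp_iff hF (g - f)⟩
end

section
/- Let D be a totally ordered integral domain, B a boolean algebra, and D[B]* the boolean power with its f-algebra ordering. Then for f, g ∈ D[B]* and a ∈ D: (f ∧ g)(a) = ⋁{f(b) ∧ g(c) : min(b,c) = a} and (f ∨ g)(a) = ⋁{f(b) ∧ g(c) : max(b,c) = a}. -/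
open Finset

/-!
Read through the Stone space of `B`, an element of `D[B]*` is a locally constant `D`-valued
function, and its order is pointwise. Concretely, `p` is positive iff `p x = ⊥` for all
`x < 0`: idempotents only take the values `0` and `1`, and conversely `p = ∑ t • e t` over its
finitely many nonzero values `t`, with `e t` the idempotent that is `1` exactly on `p t`.
Through the description of `q - p` as a join, `p ≤ q` becomes `PartitionLE`: `q b` and `p c`
are disjoint whenever `b < c`. For this relation `a ↦ ⋁{f b ⊓ g c : min b c = a}` is the meet
of `f` and `g`: a common lower bound `v` has `v c` disjoint from `f b` and `g b` whenever
`b < c`, hence from every term of the join defining the meet at `b`. The join is the meet for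
the reversed order on `D`.
-/

open Function

section Partition

variable {X Y Z B : Type*} [BooleanAlgebra B]

lemma IsLUB.disjoint_left_iff {S : Set B} {s a : B} (hs : IsLUB S s) :
    Disjoint s a ↔ ∀ x ∈ S, Disjoint x a := by
  simp only [← le_compl_iff_disjoint_right, isLUB_le_iff hs, mem_upperBounds]

lemma IsLUB.eq_bot_iff {S : Set B} {s : B} (hs : IsLUB S s) : s = ⊥ ↔ ∀ x ∈ S, x = ⊥ := by
  simp only [← le_bot_iff, isLUB_le_iff hs, mem_upperBounds]

/-- Finite partition of unity of `B` indexed by `X`; `IsBPFn D B` is the case `X = D`. -/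
def IsBoolPartition (p : X → B) : Prop :=
  (Set.range p).Finite ∧ (∀ a b : X, a ≠ b → p a ⊓ p b = ⊥) ∧ IsLUB (Set.range p) ⊤

namespace IsBoolPartition

variable {p : X → B} {q : Y → B}

lemma pairwise_disjoint (hp : IsBoolPartition p) : Pairwise (Disjoint on p) :=
  fun a b hab => disjoint_iff.2 (hp.2.1 a b hab)

lemma eq_top_of_forall_le (hp : IsBoolPartition p) {u : B} (hu : ∀ x, p x ≤ u) : u = ⊤ :=
  top_le_iff.1 (hp.2.2.2 (Set.forall_mem_range.2 hu))

lemma le_of_forall_ne_disjoint (hp : IsBoolPartition p) {c : B} {x₀ : X}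
    (hc : ∀ x ≠ x₀, Disjoint c (p x)) : c ≤ p x₀ := by
  refine himp_eq_top_iff.1 (hp.eq_top_of_forall_le fun x => le_himp_iff.2 ?_)
  rcases eq_or_ne x x₀ with rfl | hx
  · exact inf_le_left
  · exact (hc x hx).symm.le_bot.trans bot_le

lemma ext_of_forall_ne {p q : X → B} (hp : IsBoolPartition p) (hq : IsBoolPartition q) {x₀ : X}
    (h : ∀ x ≠ x₀, p x = q x) : p = q := by
  funext x
  rcases eq_or_ne x x₀ with rfl | hx
  · refine le_antisymm (hq.le_of_forall_ne_disjoint fun y hy => ?_)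
      (hp.le_of_forall_ne_disjoint fun y hy => ?_)
    · rw [← h y hy]
      exact hp.pairwise_disjoint hy.symm
    · rw [h y hy]
      exact hq.pairwise_disjoint hy.symm
  · exact h x hx

lemma finite_setOf_ne_bot (hp : IsBoolPartition p) : {x | p x ≠ ⊥}.Finite := by
  refine Set.Finite.of_finite_image (hp.1.subset (Set.image_subset_range _ _))
    fun a ha b _ hab => ?_
  by_contra hne
  exact ha (by simpa [hab] using hp.2.1 a b hne)

lemma inf_prod (hp : IsBoolPartition p) (hq : IsBoolPartition q) :
    IsBoolPartition fun z : X × Y => p z.1 ⊓ q z.2 := by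
  refine ⟨(hp.1.image2 (· ⊓ ·) hq.1).subset ?_, ?_, ?_⟩
  · rintro _ ⟨z, rfl⟩
    exact Set.mem_image2_of_mem (Set.mem_range_self _) (Set.mem_range_self _)
  · rintro ⟨a, b⟩ ⟨a', b'⟩ hne
    refine disjoint_iff.1 ?_
    rcases ne_or_eq a a' with ha | rfl
    · exact (hp.pairwise_disjoint ha).mono inf_le_left inf_le_left
    · exact (hq.pairwise_disjoint fun hb => hne (congrArg _ hb)).mono inf_le_right inf_le_right
  · refine ⟨fun _ _ => le_top, fun u hu => (hp.eq_top_of_forall_le fun a => ?_).ge⟩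
    refine himp_eq_top_iff.1 (hq.eq_top_of_forall_le fun b => le_himp_iff.2 ?_)
    rw [inf_comm]
    exact hu ⟨(a, b), rfl⟩

lemma exists_isLUB_fiber (hp : IsBoolPartition p) (φ : X → Z) :
    ∃ m : Z → B, IsBoolPartition m ∧ ∀ z, IsLUB (p '' (φ ⁻¹' {z})) (m z) := by
  have hfib : ∀ z, (p '' (φ ⁻¹' {z})).Finite := fun z =>
    hp.1.subset (Set.image_subset_range _ _)
  have hm : ∀ z, IsLUB (p '' (φ ⁻¹' {z})) ((hfib z).toFinset.sup id) := fun z => by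
    simpa using (hfib z).toFinset.isLUB_sup_id
  refine ⟨fun z => (hfib z).toFinset.sup id, ⟨?_, fun z z' hz => ?_, ?_⟩, hm⟩
  · classical
    refine (hp.1.toFinset.powerset.image fun T => T.sup id).finite_toSet.subset ?_
    rintro _ ⟨z, rfl⟩
    refine Finset.mem_coe.2 (Finset.mem_image.2 ⟨_, Finset.mem_powerset.2 ?_, rfl⟩)
    exact Set.Finite.toFinset_subset_toFinset.2 (Set.image_subset_range _ _)
  · refine disjoint_iff.1 ((hm z).disjoint_left_iff.2 ?_)
    rintro _ ⟨x, hx, rfl⟩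
    refine ((hm z').disjoint_left_iff.2 ?_).symm
    rintro _ ⟨x', hx', rfl⟩
    exact hp.pairwise_disjoint fun h => hz (by rw [← hx, ← hx', h])
  · refine ⟨fun _ _ => le_top, fun u hu => (hp.eq_top_of_forall_le fun x => ?_).ge⟩
    exact ((hm (φ x)).1 ⟨x, rfl, rfl⟩).trans (hu ⟨φ x, rfl⟩)

lemma exists_isLUB_inf (hp : IsBoolPartition p) (hq : IsBoolPartition q) (op : X → Y → Z) :
    ∃ m : Z → B, IsBoolPartition m ∧
      ∀ z, IsLUB {v | ∃ a b, op a b = z ∧ v = p a ⊓ q b} (m z) := by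
  obtain ⟨m, hm, hlub⟩ := (hp.inf_prod hq).exists_isLUB_fiber fun w => op w.1 w.2
  refine ⟨m, hm, fun z => ?_⟩
  convert hlub z using 1
  ext v
  simp [eq_comm]

end IsBoolPartition

end Partition

section Rel

variable {S T : Type*}

lemma relIsGLB.of_image {le : S → S → Prop} {R : T → T → Prop} {F : S → T} {A : Set S}
    {u : S} (hR : ∀ x y, le x y ↔ R (F x) (F y)) (h : relIsGLB R (F '' A) (F u)) :
    relIsGLB le A u :=
  ⟨fun x hx => (hR u x).2 (h.1 _ ⟨x, hx, rfl⟩),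
    fun v hv => (hR v u).2 (h.2 (F v) (by rintro _ ⟨x, hx, rfl⟩; exact (hR v x).1 (hv x hx)))⟩

lemma relIsLUB.of_image {le : S → S → Prop} {R : T → T → Prop} {F : S → T} {A : Set S}
    {u : S} (hR : ∀ x y, le x y ↔ R (F x) (F y)) (h : relIsLUB R (F '' A) (F u)) :
    relIsLUB le A u :=
  relIsGLB.of_image (le := flip le) (R := flip R) (fun x y => hR y x) h

end Rel

section PartitionLE

variable {α B : Type*} [LinearOrder α] [BooleanAlgebra B]

/-- `p ≤ q` at every point of the Stone space of `B`: wherever `p` takes the value `c`,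
`q` takes no value below `c`. -/
def PartitionLE (p q : α → B) : Prop :=
  ∀ ⦃b c⦄, b < c → Disjoint (q b) (p c)

lemma partitionLE_orderDual :
    (PartitionLE : (αᵒᵈ → B) → (αᵒᵈ → B) → Prop) =
      flip (PartitionLE : (α → B) → (α → B) → Prop) := by
  funext p q
  exact propext ⟨fun h b c hbc => (h hbc).symm, fun h b c hbc => (h hbc).symm⟩

variable {f g : α → B}

lemma relIsGLB_partitionLE_of_isLUB_min (hf : Pairwise (Disjoint on f))
    (hg : Pairwise (Disjoint on g)) {m : α → B}
    (hm : ∀ a, IsLUB {x | ∃ b c, min b c = a ∧ x = f b ⊓ g c} (m a)) :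
    relIsGLB PartitionLE {f, g} m := by
  refine ⟨?_, fun v hv b c hbc => ?_⟩
  · rintro _ (rfl | rfl) b c hbc <;>
      refine ((hm c).disjoint_left_iff.2 ?_).symm <;>
      rintro _ ⟨b', c', rfl, rfl⟩
    · exact (hf (hbc.trans_le (min_le_left b' c')).ne').mono_left inf_le_left
    · exact (hg (hbc.trans_le (min_le_right b' c')).ne').mono_left inf_le_right
  · refine (hm b).disjoint_left_iff.2 ?_
    rintro _ ⟨b', c', rfl, rfl⟩
    rcases min_choice b' c' with h | h <;> rw [h] at hbc
    · exact (hv f (Set.mem_insert _ _) hbc).mono_left inf_le_left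
    · exact (hv g (Set.mem_insert_of_mem _ rfl) hbc).mono_left inf_le_right

lemma relIsLUB_partitionLE_of_isLUB_max (hf : Pairwise (Disjoint on f))
    (hg : Pairwise (Disjoint on g)) {j : α → B}
    (hj : ∀ a, IsLUB {x | ∃ b c, max b c = a ∧ x = f b ⊓ g c} (j a)) :
    relIsLUB PartitionLE {f, g} j := by
  have h := relIsGLB_partitionLE_of_isLUB_min (α := αᵒᵈ) hf hg hj
  rwa [partitionLE_orderDual] at h

end PartitionLE

section BooleanPower

variable {D B : Type*} [CommRing D] [BooleanAlgebra B]

lemma DBStar.isBoolPartition (p : DBStar D B) : IsBoolPartition p.1 := p.2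

lemma DBStar.ext_of_ne_zero {p q : DBStar D B} (h : ∀ x ≠ 0, p.1 x = q.1 x) : p = q :=
  Subtype.ext (p.isBoolPartition.ext_of_forall_ne q.isBoolPartition h)

/-- The idempotent of `D[B]*` attached to `b ∈ B`: it is `1` on `b` and `0` on `bᶜ`. -/
def DBStar.indicator [DecidableEq D] [Nontrivial D] (b : B) : DBStar D B :=
  ⟨fun x => if x = 1 then b else if x = 0 then bᶜ else ⊥, by
    refine ⟨(Set.toFinite {b, bᶜ, ⊥}).subset ?_, fun x y hxy => ?_, fun _ _ => le_top,
      fun u hu => ?_⟩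
    · rintro _ ⟨x, rfl⟩
      dsimp only
      split_ifs <;> simp
    · dsimp only
      split_ifs <;> simp_all
    · rw [← sup_compl_eq_top (x := b)]
      exact sup_le (hu ⟨1, if_pos rfl⟩) (hu ⟨0, (if_neg zero_ne_one).trans (if_pos rfl)⟩)⟩

@[simp]
lemma DBStar.indicator_apply_one [DecidableEq D] [Nontrivial D] (b : B) :
    (indicator b : DBStar D B).1 1 = b :=
  if_pos rfl

lemma DBStar.indicator_apply_of_ne_zero [DecidableEq D] [Nontrivial D] (b : B) {x : D}
    (hx : x ≠ 0) : (indicator b : DBStar D B).1 x = if x = 1 then b else ⊥ := by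
  simp [indicator, hx]

variable [CommRing (DBStar D B)] [Algebra D (DBStar D B)]

namespace FosterOps

lemma add_isLUB (hF : FosterOps D B) (p q : DBStar D B) (a : D) :
    IsLUB {x | ∃ b c, b + c = a ∧ x = p.1 b ⊓ q.1 c} ((p + q).1 a) :=
  hF.1 p q a

lemma mul_isLUB (hF : FosterOps D B) (p q : DBStar D B) (a : D) :
    IsLUB {x | ∃ b c, b * c = a ∧ x = p.1 b ⊓ q.1 c} ((p * q).1 a) :=
  hF.2.1 p q a

lemma smul_isLUB (hF : FosterOps D B) (t : D) (p : DBStar D B) (a : D) :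
    IsLUB {x | ∃ c, t * c = a ∧ x = p.1 c} ((t • p).1 a) :=
  hF.2.2 t p a

lemma zero_apply_of_ne (hF : FosterOps D B) {a : D} (ha : a ≠ 0) :
    (0 : DBStar D B).1 a = ⊥ := by
  have h := hF.smul_isLUB 0 0 a
  rw [zero_smul] at h
  refine h.eq_bot_iff.2 ?_
  rintro _ ⟨c, hc, rfl⟩
  exact absurd (by rw [← hc, zero_mul]) ha

lemma neg_apply (hF : FosterOps D B) (p : DBStar D B) (a : D) : (-p).1 a = p.1 (-a) := by
  have h := hF.smul_isLUB (-1) p a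
  rw [neg_one_smul] at h
  refine h.unique (IsGreatest.isLUB ⟨⟨-a, by ring, rfl⟩, ?_⟩)
  rintro _ ⟨c, hc, rfl⟩
  obtain rfl : c = -a := by linear_combination -hc
  exact le_rfl

lemma sub_isLUB (hF : FosterOps D B) (p q : DBStar D B) (a : D) :
    IsLUB {x | ∃ b c, b - c = a ∧ x = p.1 b ⊓ q.1 c} ((p - q).1 a) := by
  rw [sub_eq_add_neg]
  convert hF.add_isLUB p (-q) a using 1
  ext x
  constructor
  · rintro ⟨b, c, rfl, rfl⟩
    exact ⟨b, -c, (sub_eq_add_neg b c).symm, by rw [hF.neg_apply, neg_neg]⟩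
  · rintro ⟨b, c, rfl, rfl⟩
    exact ⟨b, -c, sub_neg_eq_add b c, by rw [hF.neg_apply]⟩

lemma add_apply_of_disjoint (hF : FosterOps D B) {p q : DBStar D B}
    (hpq : ∀ b c, b ≠ 0 → c ≠ 0 → Disjoint (p.1 b) (q.1 c)) {x : D} (hx : x ≠ 0) :
    (p + q).1 x = p.1 x ⊔ q.1 x := by
  refine (hF.add_isLUB p q x).unique ⟨?_, fun u hu => sup_le ?_ ?_⟩
  · rintro _ ⟨b, c, rfl, rfl⟩
    rcases eq_or_ne b 0 with rfl | hb
    · exact inf_le_right.trans (by rw [zero_add]; exact le_sup_right)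
    rcases eq_or_ne c 0 with rfl | hc
    · exact inf_le_left.trans (by rw [add_zero]; exact le_sup_left)
    exact (hpq b c hb hc).le_bot.trans bot_le
  · have hle : p.1 x ≤ q.1 0 :=
      q.isBoolPartition.le_of_forall_ne_disjoint fun c hc => hpq x c hx hc
    simpa [inf_eq_left.2 hle] using hu ⟨x, 0, add_zero x, rfl⟩
  · have hle : q.1 x ≤ p.1 0 :=
      p.isBoolPartition.le_of_forall_ne_disjoint fun b hb => (hpq b x hb hx).symm
    simpa [inf_eq_right.2 hle] using hu ⟨0, x, zero_add x, rfl⟩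

section Domain

variable [IsDomain D]

lemma idem_apply_eq_bot (hF : FosterOps D B) {e : DBStar D B} (he : IsIdempotentElem e) {x : D}
    (h0 : x ≠ 0) (h1 : x ≠ 1) : e.1 x = ⊥ := by
  have hle : e.1 x ≤ e.1 (x * x) := by
    have h := hF.mul_isLUB e e (x * x)
    rw [he.eq] at h
    exact h.1 ⟨x, x, rfl, (inf_idem _).symm⟩
  have hne : x * x ≠ x := fun h => h1 ((mul_eq_left₀ h0).1 h)
  exact disjoint_self.1 ((e.isBoolPartition.pairwise_disjoint hne.symm).mono_right hle)

variable [DecidableEq D]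

open DBStar

lemma indicator_mul_indicator (hF : FosterOps D B) (b c : B) :
    (indicator b * indicator c : DBStar D B) = indicator (b ⊓ c) := by
  refine ext_of_ne_zero fun x hx => ?_
  rw [indicator_apply_of_ne_zero _ hx]
  refine (hF.mul_isLUB _ _ x).unique ⟨?_, fun w hw => ?_⟩
  · rintro _ ⟨u, v, rfl, rfl⟩
    rw [indicator_apply_of_ne_zero _ (left_ne_zero_of_mul hx),
      indicator_apply_of_ne_zero _ (right_ne_zero_of_mul hx)]
    split_ifs <;> simp_all
  · split_ifs with hx1
    · exact hw ⟨1, 1, by rw [one_mul, hx1], by simp⟩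
    · exact bot_le

lemma indicator_isIdempotentElem (hF : FosterOps D B) (b : B) :
    IsIdempotentElem (indicator b : DBStar D B) := by
  rw [IsIdempotentElem, hF.indicator_mul_indicator, inf_idem]

lemma indicator_mul_indicator_of_disjoint (hF : FosterOps D B) {b c : B} (h : Disjoint b c) :
    (indicator b * indicator c : DBStar D B) = 0 := by
  rw [hF.indicator_mul_indicator, h.eq_bot]
  exact ext_of_ne_zero fun x hx => by
    rw [indicator_apply_of_ne_zero _ hx, hF.zero_apply_of_ne hx, ite_self]

lemma smul_indicator_apply (hF : FosterOps D B) {t : D} (ht : t ≠ 0) (b : B) {x : D}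
    (hx : x ≠ 0) : (t • indicator b : DBStar D B).1 x = if x = t then b else ⊥ := by
  have h := hF.smul_isLUB t (indicator b) x
  split_ifs with hxt
  · rw [hxt] at h ⊢
    refine h.unique (IsGreatest.isLUB ⟨⟨1, mul_one t, (indicator_apply_one b).symm⟩, ?_⟩)
    rintro _ ⟨c, hc, rfl⟩
    rw [(mul_eq_left₀ ht).1 hc, indicator_apply_one]
  · refine h.eq_bot_iff.2 ?_
    rintro _ ⟨c, rfl, rfl⟩
    rw [indicator_apply_of_ne_zero _ (right_ne_zero_of_mul hx), if_neg]
    rintro rfl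
    exact hxt (mul_one t)

lemma sum_smul_indicator_apply (hF : FosterOps D B) (A : Finset D) (hA : 0 ∉ A) (b : D → B)
    (hb : (A : Set D).PairwiseDisjoint b) {x : D} (hx : x ≠ 0) :
    (∑ t ∈ A, t • indicator (b t) : DBStar D B).1 x = if x ∈ A then b x else ⊥ := by
  induction A using Finset.induction_on generalizing x with
  | empty => simp [hF.zero_apply_of_ne hx]
  | insert t A ht ih =>
    rw [Finset.mem_insert, not_or] at hA
    rw [Finset.coe_insert, Set.pairwiseDisjoint_insert] at hb
    have ht0 : t ≠ 0 := Ne.symm hA.1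
    rw [Finset.sum_insert ht, hF.add_apply_of_disjoint ?_ hx, hF.smul_indicator_apply ht0 _ hx,
      ih hA.2 hb.1 hx]
    · by_cases hxt : x = t
      · subst hxt
        simp [ht]
      · simp [hxt]
    · intro u v hu hv
      rw [hF.smul_indicator_apply ht0 _ hu, ih hA.2 hb.1 hv]
      split_ifs with hut hvA
      · subst hut
        exact hb.2 v hvA fun h => ht (h ▸ hvA)
      all_goals simp

end Domain

end FosterOps

end BooleanPower

section Order

variable {D : Type*} [CommRing D] [LinearOrder D] [IsStrictOrderedRing D]

lemma orthNonnegDecomp_finset_sum {S ι : Type*} [CommRing S] [Algebra D S] (A : Finset ι)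
    (a : ι → D) (e : ι → S) (ha : ∀ i ∈ A, 0 ≤ a i)
    (he : ∀ i ∈ A, IsIdempotentElem (e i))
    (horth : ∀ i ∈ A, ∀ j ∈ A, i ≠ j → e i * e j = 0) :
    OrthNonnegDecomp D S (∑ i ∈ A, a i • e i) := by
  let E := A.equivFin
  refine ⟨A.card, fun k => a (E.symm k), fun k => e (E.symm k), fun k => ha _ (E.symm k).2,
    fun k => he _ (E.symm k).2, fun k l hkl => horth _ (E.symm k).2 _ (E.symm l).2
      fun h => hkl (E.symm.injective (Subtype.ext h)), ?_⟩
  rw [← Finset.sum_coe_sort A]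
  exact (E.symm.sum_comp fun i : A => a i • e i).symm

variable {B : Type*} [BooleanAlgebra B] [CommRing (DBStar D B)] [Algebra D (DBStar D B)]

namespace FosterOps

open DBStar

lemma forall_neg_eq_bot_of_orthNonnegDecomp (hF : FosterOps D B) {p : DBStar D B}
    (hp : OrthNonnegDecomp D (DBStar D B) p) : ∀ x < 0, p.1 x = ⊥ := by
  obtain ⟨n, a, e, ha, he, -, rfl⟩ := hp
  refine Finset.sum_induction _ (fun p : DBStar D B => ∀ x < 0, p.1 x = ⊥)
    (fun p q hp hq x hx => ?_) (fun x hx => hF.zero_apply_of_ne hx.ne) (fun i _ x hx => ?_)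
  · refine (hF.add_isLUB p q x).eq_bot_iff.2 ?_
    rintro _ ⟨b, c, rfl, rfl⟩
    rcases lt_or_ge b 0 with hb | hb
    · rw [hp b hb, bot_inf_eq]
    · rw [hq c (by linarith), inf_bot_eq]
  · refine (hF.smul_isLUB (a i) (e i) x).eq_bot_iff.2 ?_
    rintro _ ⟨c, rfl, rfl⟩
    refine hF.idem_apply_eq_bot (he i) ?_ ?_
    · rintro rfl
      simp at hx
    · rintro rfl
      rw [mul_one] at hx
      exact (ha i).not_gt hx

lemma orthNonnegDecomp_of_forall_neg (hF : FosterOps D B) {p : DBStar D B}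
    (hp : ∀ x < 0, p.1 x = ⊥) : OrthNonnegDecomp D (DBStar D B) p := by
  set A := p.isBoolPartition.finite_setOf_ne_bot.toFinset.erase 0
  have hmem : ∀ x, x ∈ A ↔ x ≠ 0 ∧ p.1 x ≠ ⊥ := by simp [A]
  have hdisj : (A : Set D).PairwiseDisjoint p.1 := fun s _ t _ hst =>
    p.isBoolPartition.pairwise_disjoint hst
  have hsum : ∑ t ∈ A, t • indicator (p.1 t) = p := ext_of_ne_zero fun x hx => by
    rw [hF.sum_smul_indicator_apply A (fun h => ((hmem 0).1 h).1 rfl) _ hdisj hx]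
    split_ifs with hxA
    · rfl
    · rw [eq_comm]
      simpa [hmem, hx] using hxA
  rw [← hsum]
  refine orthNonnegDecomp_finset_sum A _ _ (fun t ht => ?_)
    (fun t _ => hF.indicator_isIdempotentElem _)
    (fun s hs t ht hst => hF.indicator_mul_indicator_of_disjoint (hdisj hs ht hst))
  exact not_lt.1 fun hneg => ((hmem t).1 ht).2 (hp t hneg)

lemma orthNonnegDecomp_iff (hF : FosterOps D B) {p : DBStar D B} :
    OrthNonnegDecomp D (DBStar D B) p ↔ ∀ x < 0, p.1 x = ⊥ :=
  ⟨hF.forall_neg_eq_bot_of_orthNonnegDecomp, hF.orthNonnegDecomp_of_forall_neg⟩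

lemma specLE_iff (hF : FosterOps D B) (p q : DBStar D B) :
    specLE D (DBStar D B) p q ↔ PartitionLE p.1 q.1 := by
  rw [specLE, hF.orthNonnegDecomp_iff]
  constructor
  · intro h b c hbc
    exact disjoint_iff.2 ((hF.sub_isLUB q p (b - c)).eq_bot_iff.1 (h _ (sub_neg.2 hbc)) _
      ⟨b, c, rfl, rfl⟩)
  · intro h x hx
    refine (hF.sub_isLUB q p x).eq_bot_iff.2 ?_
    rintro _ ⟨b, c, rfl, rfl⟩
    exact (h (sub_neg.1 hx)).eq_bot

end FosterOps

end Order

/-- the lattice meet and join in `D[B]*` (with respect to its f-algebra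
order) are computed by `(f ∧ g)(a) = ⋁{f b ⊓ g c : min b c = a}` and
`(f ∨ g)(a) = ⋁{f b ⊓ g c : max b c = a}`. -/
theorem statement8 (D B : Type*) [CommRing D] [LinearOrder D] [IsStrictOrderedRing D] [BooleanAlgebra B]
    [CommRing (DBStar D B)] [Algebra D (DBStar D B)] (hF : FosterOps D B)
    (f g : DBStar D B) :
    (∃ m : DBStar D B, relIsGLB (specLE D (DBStar D B)) {f, g} m ∧
      ∀ a : D, IsLUB {x : B | ∃ b c : D, min b c = a ∧ x = f.1 b ⊓ g.1 c} (m.1 a)) ∧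
    (∃ j : DBStar D B, relIsLUB (specLE D (DBStar D B)) {f, g} j ∧
      ∀ a : D, IsLUB {x : B | ∃ b c : D, max b c = a ∧ x = f.1 b ⊓ g.1 c} (j.1 a)) := by
  have hf := f.isBoolPartition
  have hg := g.isBoolPartition
  obtain ⟨m, hmB, hm⟩ := hf.exists_isLUB_inf hg min
  obtain ⟨j, hjB, hj⟩ := hf.exists_isLUB_inf hg max
  refine ⟨⟨⟨m, hmB⟩, ?_, hm⟩, ⟨j, hjB⟩, ?_, hj⟩
  · refine relIsGLB.of_image (F := fun p : DBStar D B => p.1) hF.specLE_iff ?_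
    rw [Set.image_pair]
    exact relIsGLB_partitionLE_of_isLUB_min hf.pairwise_disjoint hg.pairwise_disjoint hm
  · refine relIsLUB.of_image (F := fun p : DBStar D B => p.1) hF.specLE_iff ?_
    rw [Set.image_pair]
    exact relIsLUB_partitionLE_of_isLUB_max hf.pairwise_disjoint hg.pairwise_disjoint hj
end

section
/- Let D be a totally ordered integral domain, B a boolean algebra, and let D[B]^♭ carry the D-algebra structure transported along the bijection α : D[B]* → D[B]^♭, α(f)(a) = ⋁{f(b) : b ≥ a}. Then for f, g ∈ D[B]^♭ and a ∈ D: (f + g)(a) = ⋁{f(b₁) ∧ g(b₂) : b₁ + b₂ ≥ a}; if b > 0 in D then (bf)(a) = ⋁{f(c) : bc ≥ a}; and if f, g ≥ 0 then (fg)(a) = ⋁{f(b₁) ∧ g(b₂) : b₁, b₂ ≥ 0, b₁b₂ ≥ a}. -/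
open Finset

/-! With `F = α⁻¹ f` and `G = α⁻¹ g`, the value `(f + g)(a) = α (F + G) (a)` is the join over
`b ≥ a` of the joins of `F c ⊓ G d` over `c + d = b`, i.e. the join of `F c ⊓ G d` over
`c + d ≥ a`. On the other side, since meets distribute over existing joins in a boolean algebra,
`f b₁ ⊓ g b₂` is the join of `F c ⊓ G d` over `c ≥ b₁, d ≥ b₂`; as `+` is monotone, the join of
these over `b₁ + b₂ ≥ a` is the same element. Scalar multiplication by `b > 0` and products work
the same way. For products, `·` is monotone only on nonnegative arguments, which suffices because
a nonnegative element of `D[B]*` vanishes at negative arguments: a nonnegative combination of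
idempotents, each taking only the values `0` and `1`. -/

section SupAbove

variable {ι κ D B : Type*}

/-- The relation `f = α F` of the paper, with `α F (i) = ⋁ {F j | i ≤ j}`. -/
def IsSupAbove [Preorder ι] [Preorder B] (F f : ι → B) : Prop :=
  ∀ i, IsLUB {x | ∃ j, i ≤ j ∧ x = F j} (f i)

def IsFiberSup [Preorder B] (op : ι → D) (Φ : ι → B) (H : D → B) : Prop :=
  ∀ b, IsLUB {x | ∃ j, op j = b ∧ x = Φ j} (H b)

theorem IsSupAbove.inf [Preorder ι] [Preorder κ] [GeneralizedHeytingAlgebra B]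
    {F f : ι → B} {G g : κ → B} (hf : IsSupAbove F f) (hg : IsSupAbove G g) :
    IsSupAbove (fun p : ι × κ => F p.1 ⊓ G p.2) (fun p => f p.1 ⊓ g p.2) := by
  intro p
  have h := isLUB_image2_of_isLUB_isLUB (l := (· ⊓ ·)) (fun b _ _ => le_himp_iff.symm)
    (fun _ => gc_inf_himp) (hf p.1) (hg p.2)
  convert h using 1
  ext x
  simp [Prod.le_def, and_assoc, eq_comm]

theorem IsSupAbove.isLUB_of_isFiberSup [Preorder ι] [Preorder D] [PartialOrder B] [OrderBot B]
    {Φ φ : ι → B} {H h : D → B} {op : ι → D} {P : ι → Prop}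
    (hop : ∀ i j, P i → i ≤ j → op i ≤ op j) (hΦ : ∀ j, ¬ P j → Φ j = ⊥)
    (hφ : IsSupAbove Φ φ) (hH : IsFiberSup op Φ H) (hh : IsSupAbove H h) (a : D) :
    IsLUB {x | ∃ i, P i ∧ a ≤ op i ∧ x = φ i} (h a) := by
  constructor
  · rintro _ ⟨i, hi, hai, rfl⟩
    refine (hφ i).2 ?_
    rintro _ ⟨j, hij, rfl⟩
    exact ((hH (op j)).1 ⟨j, rfl, rfl⟩).trans
      ((hh a).1 ⟨op j, hai.trans (hop i j hi hij), rfl⟩)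
  · intro w hw
    refine (hh a).2 ?_
    rintro _ ⟨b, hab, rfl⟩
    refine (hH b).2 ?_
    rintro _ ⟨j, rfl, rfl⟩
    by_cases hj : P j
    · exact ((hφ j).1 ⟨j, le_rfl, rfl⟩).trans (hw ⟨j, hj, hab, rfl⟩)
    · simp [hΦ j hj]

end SupAbove

theorem OrthNonnegDecomp.map {D S T F : Type*} [CommRing D] [LinearOrder D]
    [IsStrictOrderedRing D] [CommRing S] [Algebra D S] [CommRing T] [Algebra D T]
    [FunLike F S T] [AlgHomClass F D S T] (φ : F) {s : S} (hs : OrthNonnegDecomp D S s) :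
    OrthNonnegDecomp D T (φ s) := by
  obtain ⟨n, a, e, ha, he, horth, rfl⟩ := hs
  refine ⟨n, a, fun i => φ (e i), ha, fun i => (he i).map φ, fun i j hij => ?_, ?_⟩
  · rw [← map_mul, horth i j hij, map_zero]
  · simp only [map_sum, map_smul]

namespace FosterOps

variable {D B : Type*} [CommRing D] [BooleanAlgebra B]
  [CommRing (DBStar D B)] [Algebra D (DBStar D B)] (hF : FosterOps D B)
include hF

theorem isFiberSup_add (F G : DBStar D B) :
    IsFiberSup (fun p : D × D => p.1 + p.2) (fun p => F.1 p.1 ⊓ G.1 p.2) (F + G).1 := by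
  simpa [IsFiberSup, Prod.exists] using hF.1 F G

theorem isFiberSup_mul (F G : DBStar D B) :
    IsFiberSup (fun p : D × D => p.1 * p.2) (fun p => F.1 p.1 ⊓ G.1 p.2) (F * G).1 := by
  simpa [IsFiberSup, Prod.exists] using hF.2.1 F G

theorem isFiberSup_smul (b : D) (F : DBStar D B) : IsFiberSup (b * ·) F.1 (b • F).1 :=
  hF.2.2 b F

/-- `E b = (E * E) b` is the join of the `E c ⊓ E c` with `c * c = b`, and each of these is
disjoint from `E b` unless `b * b = b`. -/
theorem idempotent_apply_eq_bot [NoZeroDivisors D] {E : DBStar D B} (hE : IsIdempotentElem E)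
    {b : D} (hb0 : b ≠ 0) (hb1 : b ≠ 1) : E.1 b = ⊥ := by
  have hlub := hF.2.1 E E b
  rw [hE.eq] at hlub
  have hle : E.1 b ≤ (E.1 b)ᶜ := by
    refine hlub.2 ?_
    rintro _ ⟨c, d, hcd, rfl⟩
    obtain rfl | hc := eq_or_ne c d
    · have hcb : c ≠ b := by
        rintro rfl
        have : c * (c - 1) = 0 := by linear_combination hcd
        rcases mul_eq_zero.mp this with h | h
        exacts [hb0 h, hb1 (sub_eq_zero.mp h)]
      rw [inf_idem, le_compl_iff_disjoint_right, disjoint_iff]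
      exact E.2.2.1 c b hcb
    · simp [E.2.2.1 c d hc]
  simpa using le_inf (le_refl (E.1 b)) hle

variable [LinearOrder D] [IsStrictOrderedRing D]

theorem smul_idempotent_apply_of_neg {a : D} (ha : 0 ≤ a) {E : DBStar D B}
    (hE : IsIdempotentElem E) {c : D} (hc : c < 0) : (a • E).1 c = ⊥ := by
  refine le_bot_iff.mp ((hF.2.2 a E c).2 ?_)
  rintro _ ⟨d, rfl, rfl⟩
  refine (hF.idempotent_apply_eq_bot hE ?_ ?_).le
  · rintro rfl
    simp at hc
  · rintro rfl
    exact absurd ha (by simpa using hc)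

theorem add_apply_of_neg {F G : DBStar D B} (hF0 : ∀ c < 0, F.1 c = ⊥)
    (hG0 : ∀ c < 0, G.1 c = ⊥) {c : D} (hc : c < 0) : (F + G).1 c = ⊥ := by
  refine le_bot_iff.mp ((hF.1 F G c).2 ?_)
  rintro _ ⟨b, d, rfl, rfl⟩
  rcases lt_or_ge b 0 with hb | hb
  · simp [hF0 b hb]
  · simp [hG0 d (by linarith)]

theorem apply_of_neg_of_orthNonnegDecomp {F : DBStar D B}
    (hdec : OrthNonnegDecomp D (DBStar D B) F) {c : D} (hc : c < 0) : F.1 c = ⊥ := by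
  obtain ⟨n, a, e, ha, he, -, rfl⟩ := hdec
  refine Finset.sum_induction _ (fun s : DBStar D B => ∀ c < 0, s.1 c = ⊥)
    (fun _ _ => hF.add_apply_of_neg) ?_
    (fun i _ _ => hF.smul_idempotent_apply_of_neg (ha i) (he i)) c hc
  rw [← zero_smul D (1 : DBStar D B)]
  exact fun _ => hF.smul_idempotent_apply_of_neg le_rfl IsIdempotentElem.one

end FosterOps

/-- formulas for addition, positive scalar multiplication, and products of
nonnegative elements in `D[B]♭`, whose `D`-algebra structure is transported from `D[B]*`
along the bijection `α(f)(a) = ⋁{f b : b ≥ a}`. -/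
theorem statement10 (D B : Type*) [CommRing D] [LinearOrder D] [IsStrictOrderedRing D] [BooleanAlgebra B]
    [CommRing (DBStar D B)] [Algebra D (DBStar D B)] (hF : FosterOps D B)
    [CommRing (DBFlat D B)] [Algebra D (DBFlat D B)]
    (α : DBStar D B ≃ₐ[D] DBFlat D B)
    (hα : ∀ (f : DBStar D B) (a : D),
      IsLUB {x : B | ∃ b : D, a ≤ b ∧ x = f.1 b} ((α f).1 a)) :
    (∀ f g : DBFlat D B, ∀ a : D,
      IsLUB {x : B | ∃ b₁ b₂ : D, a ≤ b₁ + b₂ ∧ x = f.1 b₁ ⊓ g.1 b₂} ((f + g).1 a)) ∧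
    (∀ b : D, 0 < b → ∀ (f : DBFlat D B) (a : D),
      IsLUB {x : B | ∃ c : D, a ≤ b * c ∧ x = f.1 c} ((b • f).1 a)) ∧
    (∀ f g : DBFlat D B, OrthNonnegDecomp D (DBFlat D B) f →
      OrthNonnegDecomp D (DBFlat D B) g → ∀ a : D,
      IsLUB {x : B | ∃ b₁ b₂ : D, 0 ≤ b₁ ∧ 0 ≤ b₂ ∧ a ≤ b₁ * b₂ ∧ x = f.1 b₁ ⊓ g.1 b₂}
        ((f * g).1 a)) := by
  have hα' (F : DBStar D B) : IsSupAbove F.1 (α F).1 := hα F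
  have hsymm (f : DBFlat D B) : IsSupAbove (α.symm f).1 f.1 := by
    simpa using hα' (α.symm f)
  refine ⟨fun f g a => ?_, fun b hb f a => ?_, fun f g hf hg a => ?_⟩
  · have h := ((hsymm f).inf (hsymm g)).isLUB_of_isFiberSup (P := fun _ => True)
      (fun _ _ _ hij => (monotone_fst.add monotone_snd) hij) (by simp) (hF.isFiberSup_add _ _)
      (by simpa using hα' (α.symm f + α.symm g)) a
    simpa [Prod.exists] using h
  · have h := (hsymm f).isLUB_of_isFiberSup (P := fun _ => True)
      (fun _ _ _ hij => mul_le_mul_of_nonneg_left hij hb.le) (by simp) (hF.isFiberSup_smul b _)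
      (by simpa using hα' (b • α.symm f)) a
    simpa using h
  · have h := ((hsymm f).inf (hsymm g)).isLUB_of_isFiberSup
      (P := fun p => 0 ≤ p.1 ∧ 0 ≤ p.2)
      (fun _ _ ⟨_, h₂⟩ ⟨hc, hd⟩ => mul_le_mul hc hd h₂ (by order)) ?_
      (hF.isFiberSup_mul _ _) (by simpa using hα' (α.symm f * α.symm g)) a
    · simpa [Prod.exists, and_assoc] using h
    · rintro ⟨c, d⟩ hcd
      rcases not_and_or.mp hcd with hc | hd
      · simp [hF.apply_of_neg_of_orthNonnegDecomp (hf.map α.symm) (not_le.mp hc)]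
      · simp [hF.apply_of_neg_of_orthNonnegDecomp (hg.map α.symm) (not_le.mp hd)]
end
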